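/- arXiv:0712.0591 — 8 statements merged into one kernel-verified Lean document; each statement's English description precedes it below -/
import Mathlib

section
/- In the lexicographic power G^λ of a nontrivial linearly ordered abelian group G, the set of elements with support bounded below λ (i.e., eventually zero past some index α < λ) forms a proper subgroup when λ is a limit ordinal, and this subgroup is dense in G^λ with respect to the order topology determined by positive elements of bounded support. -/
/-- Lexicographic strict order on functions `ι → G`. -/
def lexLt {ι G : Type*} [LinearOrder ι] [LT G] (a b : ι → G) : Prop :=
  ∃ n, (∀ m, m < n → a m = b m) ∧ a n < b n

/-- In the lexicographic power `G^λ` of a nontrivial linearly ordered abelian group `G`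
(`λ` a limit ordinal, encoded as a well-order with no maximum), the elements of bounded
support form a proper subgroup that is dense: below every positive element lies a
positive element of bounded support. -/
theorem stmt1 {ι G : Type*} [LinearOrder ι] [WellFoundedLT ι] [Nonempty ι] [NoMaxOrder ι]
    [AddCommGroup G] [LinearOrder G] [IsOrderedAddMonoid G] [Nontrivial G] :
    ∀ S : Set (ι → G), S = {a | ∃ α, ∀ i, α ≤ i → a i = 0} →
    ((0 : ι → G) ∈ S ∧ (∀ a b, a ∈ S → b ∈ S → a + b ∈ S) ∧ (∀ a, a ∈ S → -a ∈ S)) ∧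
    S ≠ Set.univ ∧
    (∀ g : ι → G, lexLt 0 g → ∃ m ∈ S, lexLt 0 m ∧ (lexLt m g ∨ m = g)) := by
  intro S hS
  subst hS
  refine ⟨⟨⟨Classical.arbitrary ι, fun i _ => rfl⟩, ?_, ?_⟩, ?_, ?_⟩
  · rintro a b ⟨α, ha⟩ ⟨β, hb⟩
    refine ⟨max α β, fun i hi => ?_⟩
    have h1 := ha i (le_trans (le_max_left _ _) hi)
    have h2 := hb i (le_trans (le_max_right _ _) hi)
    simp [h1, h2]
  · rintro a ⟨α, ha⟩
    exact ⟨α, fun i hi => by simp [ha i hi]⟩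
  · obtain ⟨g0, hg0⟩ := exists_ne (0 : G)
    intro h
    have hmem : (fun _ : ι => g0) ∈ {a : ι → G | ∃ α, ∀ i, α ≤ i → a i = 0} := by
      rw [h]; exact Set.mem_univ _
    obtain ⟨α, hα⟩ := hmem
    exact hg0 (hα α le_rfl)
  · rintro g ⟨n, hlt, hn⟩
    have hn' : (0 : G) < g n := hn
    obtain ⟨j, hj⟩ := exists_gt n
    refine ⟨fun i => if i = j then g n else 0, ?_, ⟨j, ?_, ?_⟩, Or.inl ⟨n, ?_, ?_⟩⟩
    · obtain ⟨α, hα⟩ := exists_gt j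
      exact ⟨α, fun i hi => if_neg (fun h => by subst h; exact absurd hα (not_lt.2 hi))⟩
    · intro k hk
      simp [ne_of_lt hk]
    · simpa using hn'
    · intro i hi
      have h1 : i ≠ j := ne_of_lt (hi.trans hj)
      have h2 : g i = 0 := (hlt i hi).symm
      simp [h1, h2]
    · have : n ≠ j := ne_of_lt hj
      simpa [this] using hn'
end

section
/- Let W be a nontrivial ℚ-vector space and λ an infinite cardinal. There exists a family of |W|^λ elements of W^λ that is linearly independent over ℚ and whose span intersects the subspace W^{<λ} of boundedly-supported functions only in 0; equivalently, W^λ / W^{<λ} has ℚ-dimension |W|^λ. -/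
open Cardinal

universe u

/-- The subspace `W^{<λ}` of boundedly-supported functions: those vanishing at all
indices `≥ α` for some `α`. -/
def bddSupp (ι W : Type*) [LinearOrder ι] [Nonempty ι] [AddCommGroup W] [Module ℚ W] :
    Submodule ℚ (ι → W) where
  carrier := {x | ∃ α, ∀ i, α ≤ i → x i = 0}
  zero_mem' := ⟨Classical.arbitrary ι, fun _ _ => rfl⟩
  add_mem' := by
    rintro a b ⟨α, ha⟩ ⟨β, hb⟩
    exact ⟨max α β, fun i hi => by
      simp [Pi.add_apply, ha i ((le_max_left α β).trans hi),
        hb i ((le_max_right α β).trans hi)]⟩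
  smul_mem' := by
    rintro q a ⟨α, ha⟩
    exact ⟨α, fun i hi => by simp [ha i hi]⟩

/-- Over `ℚ`, a vector space of cardinality `> ℵ₀` has rank equal to its cardinality. -/
lemma rank_eq_mk_of_big {V : Type u} [AddCommGroup V] [Module ℚ V] (h : ℵ₀ < #V) :
    Module.rank ℚ V = #V := by
  obtain ⟨⟨κ, b⟩⟩ := Module.Free.exists_basis (R := ℚ) (M := V)
  have hVκ : #V = #(κ →₀ ℚ) := b.repr.toEquiv.cardinal_eq
  have hκ : Infinite κ := by
    by_contra hfin
    rw [not_infinite_iff_finite] at hfin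
    have : #V ≤ ℵ₀ := by
      rw [hVκ]
      exact (Cardinal.mk_le_aleph0_iff).2 inferInstance
    exact absurd this (not_le.2 h)
  have hmax : #V = max #κ ℵ₀ := by
    rw [hVκ, Cardinal.mk_finsupp_lift_of_infinite]
    simp [Cardinal.mkRat]
  have hκinf : ℵ₀ ≤ #κ := Cardinal.aleph0_le_mk κ
  rw [← b.mk_eq_rank'', hmax, max_eq_left hκinf]

/-- Let `W` be a nontrivial `ℚ`-vector space and `λ` an infinite cardinal (encoded as a
well-ordered index type `ι` all of whose proper initial segments have cardinality
`< #ι`).  Then there is a `ℚ`-linearly independent family of `|W|^λ` elements of `W^λ`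
whose span meets `W^{<λ}` only in `0`; equivalently, `W^λ / W^{<λ}` has dimension
`|W|^λ`. -/
theorem stmt4 {W ι : Type u} [AddCommGroup W] [Module ℚ W] [Nontrivial W]
    [LinearOrder ι] [WellFoundedLT ι] [Infinite ι]
    (hcard : ∀ a : ι, #(Set.Iio a) < #ι) :
    (∃ s : Set (ι → W), #s = #W ^ #ι ∧ LinearIndependent ℚ ((↑) : s → (ι → W)) ∧
      Disjoint (Submodule.span ℚ s) (bddSupp ι W)) ∧
    Module.rank ℚ ((ι → W) ⧸ bddSupp ι W) = #W ^ #ι := by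
  classical
  -- a bijection `ι ≃ ι × ι`
  obtain ⟨e⟩ : Nonempty (ι ≃ ι × ι) := by
    rw [← Cardinal.eq]
    simp [Cardinal.mk_prod, Cardinal.mul_mk_eq_max]
  set p : ι → ι := fun i => (e i).1 with hp_def
  -- every fiber of `p` is cofinal
  have hp : ∀ (j a : ι), ∃ i, a ≤ i ∧ p i = j := by
    intro j a
    by_contra hno
    push_neg at hno
    have hinj : Function.Injective (fun k : ι => (⟨e.symm (j, k),
        by
          have : p (e.symm (j, k)) = j := by simp [hp_def]
          exact lt_of_not_ge fun hle => (hno _ hle this).elim⟩ : Set.Iio a)) := by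
      intro k₁ k₂ hk
      have := congrArg (fun x : Set.Iio a => e (x : ι)) hk
      simpa using this
    exact absurd (Cardinal.mk_le_of_injective hinj) (not_le.2 (hcard a))
  -- the key linear map `F f = f ∘ p`
  set F : (ι → W) →ₗ[ℚ] (ι → W) := LinearMap.funLeft ℚ W p with hF_def
  have hFker : ∀ f : ι → W, F f ∈ bddSupp ι W → f = 0 := by
    rintro f ⟨α, hα⟩
    funext j
    obtain ⟨i, hai, hij⟩ := hp j α
    have := hα i hai
    simpa [hF_def, LinearMap.funLeft, hij] using this
  have hFinj : Function.Injective F := by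
    rw [← LinearMap.ker_eq_bot, LinearMap.ker_eq_bot']
    intro f hf
    exact hFker f (hf ▸ (bddSupp ι W).zero_mem)
  -- cardinalities
  have hbig : ℵ₀ < #W ^ #ι := by
    have h2 : (2 : Cardinal) ≤ #W := Cardinal.two_le_iff.2 (exists_pair_ne W)
    calc ℵ₀ < 2 ^ ℵ₀ := Cardinal.cantor ℵ₀
      _ ≤ #W ^ ℵ₀ := Cardinal.power_le_power_right h2
      _ ≤ #W ^ #ι := Cardinal.power_le_power_left
          (by positivity) (Cardinal.aleph0_le_mk ι)
  have hcardW : #(ι → W) = #W ^ #ι := (Cardinal.power_def W ι).symm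
  have hrank : Module.rank ℚ (ι → W) = #W ^ #ι := by
    rw [rank_eq_mk_of_big (hcardW ▸ hbig), hcardW]
  constructor
  · -- the linearly independent family
    obtain ⟨⟨κ, b⟩⟩ := Module.Free.exists_basis (R := ℚ) (M := ι → W)
    refine ⟨Set.range (F ∘ b), ?_, ?_, ?_⟩
    · rw [Cardinal.mk_range_eq _ (hFinj.comp b.injective), ← hrank, b.mk_eq_rank'']
    · exact ((b.linearIndependent.map' F (LinearMap.ker_eq_bot.2 hFinj)).linearIndepOn_id)
    · have hspan : Submodule.span ℚ (Set.range (F ∘ b)) = LinearMap.range F := by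
        rw [Set.range_comp, Submodule.span_image, b.span_eq, Submodule.map_top]
      rw [hspan, Submodule.disjoint_def]
      rintro x ⟨f, rfl⟩ hx
      rw [hFker f hx, map_zero]
  · -- the rank of the quotient
    refine le_antisymm (hrank ▸ rank_quotient_le _) ?_
    have hG : Function.Injective ((bddSupp ι W).mkQ ∘ₗ F) := by
      rw [← LinearMap.ker_eq_bot, LinearMap.ker_eq_bot']
      intro f hf
      exact hFker f ((Submodule.Quotient.mk_eq_zero _).1 hf)
    exact hrank ▸ LinearMap.rank_le_of_injective _ hG
end

section
/- Let W be a ℚ-vector space, λ an infinite cardinal, and (X_i)_{i<λ} pairwise disjoint cofinal subsets of λ. For f : λ → W define A_f : λ → W by A_f(k) = f(i) if k ∈ X_i for (the unique) i, and A_f(k) = 0 otherwise. Then the map f ↦ A_f is ℚ-linear and injective, and if (f_j)_{j∈J} is linearly independent in W^λ, then no nontrivial ℚ-linear combination of the elements A_{f_j} lies in W^{<λ}. -/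
/-- Let `W` be a `ℚ`-vector space, `λ` an infinite (well-ordered) index, and
`(X i)_{i<λ}` pairwise disjoint cofinal subsets of `λ`.  Define `A f` by
`A f k = f i` if `k ∈ X i` and `A f k = 0` if `k` lies in no `X i`.  Then `f ↦ A f` is
`ℚ`-linear and injective, and if `(f j)_{j ∈ J}` is linearly independent then no
nontrivial `ℚ`-linear combination of the `A (f j)` lies in `W^{<λ}`. -/
theorem stmt6 {W ι : Type*} [AddCommGroup W] [Module ℚ W] [LinearOrder ι] [Infinite ι]
    (X : ι → Set ι) (hdisj : ∀ i j, i ≠ j → Disjoint (X i) (X j))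
    (hcof : ∀ i : ι, ∀ b : ι, ∃ a ∈ X i, b < a)
    (A : (ι → W) → (ι → W))
    (hA1 : ∀ f : ι → W, ∀ i k, k ∈ X i → A f k = f i)
    (hA2 : ∀ f : ι → W, ∀ k, (∀ i, k ∉ X i) → A f k = 0) :
    IsLinearMap ℚ A ∧ Function.Injective A ∧
      ∀ {J : Type*} (f : J → (ι → W)), LinearIndependent ℚ f →
        ∀ (s : Finset J) (q : J → ℚ),
          (∑ j ∈ s, q j • A (f j)) ∈ bddSupp ι W → ∀ j ∈ s, q j = 0 := by
  classical
  have key : ∀ (g : ι → W) (k : ι), A g k = if h : ∃ i, k ∈ X i then g h.choose else 0 := by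
    intro g k
    split_ifs with h
    · exact hA1 g _ k h.choose_spec
    · exact hA2 g k (fun i hi => h ⟨i, hi⟩)
  refine ⟨⟨?_, ?_⟩, ?_, ?_⟩
  · intro f g; funext k; simp only [key, Pi.add_apply]; split_ifs <;> simp
  · intro c f; funext k; simp only [key, Pi.smul_apply]; split_ifs <;> simp
  · intro f g hfg
    funext i
    obtain ⟨a, ha, _⟩ := hcof i i
    have := congrFun hfg a
    rw [hA1 f i a ha, hA1 g i a ha] at this
    exact this
  · intro J f hli s q ⟨α, hα⟩ j hj
    have hz : ∑ k ∈ s, q k • f k = 0 := by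
      funext i
      obtain ⟨a, ha, hlt⟩ := hcof i α
      have := hα a hlt.le
      simp only [Finset.sum_apply, Pi.smul_apply] at this ⊢
      calc ∑ k ∈ s, q k • f k i = ∑ k ∈ s, q k • A (f k) a := by
            refine Finset.sum_congr rfl fun k _ => ?_
            rw [hA1 (f k) i a ha]
        _ = 0 := this
    exact linearIndependent_iff'.mp hli s q hz j hj
end

section
/- Let λ be an infinite cardinal and κ a cardinal with κ^{<λ} = κ (i.e., κ = α^{<λ} for some α). Then Ded(κ) ≥ α^λ, where Ded(κ) is the supremum of cardinalities of Dedekind completions of linear orders of cardinality at most κ. In particular, Ded(α^{<λ}) ≥ α^λ, witnessed by the lexicographic order on α^λ over its initial-segment order α^{<λ}. -/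
open Cardinal

universe u

/-- `Ded κ`: the supremum of the cardinalities of Dedekind completions (sets of
downward-closed subsets) of linear orders of cardinality at most `κ`. -/
noncomputable def Ded (κ : Cardinal.{u}) : Cardinal.{u} :=
  sSup {c : Cardinal.{u} | ∃ (L : Type u) (_ : LinearOrder L),
    #L ≤ κ ∧ c = #{s : Set L // IsLowerSet s}}

section Aux

variable {I A : Type u} [LinearOrder I] [WellFoundedLT I] [LinearOrder A] [OrderBot A]

/-- Bounded-support functions inside the lex order. -/
def BddSupp (I A : Type u) [LinearOrder I] [LE A] [OrderBot A] :
    Set (Lex (∀ _ : I, A)) :=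
  {f | ∃ i : I, ∀ j, i ≤ j → ofLex f j = ⊥}

omit [WellFoundedLT I] [OrderBot A] in
lemma lex_lt_iff (x y : ∀ _ : I, A) :
    toLex x < toLex y ↔ ∃ i, (∀ j, j < i → x j = y j) ∧ x i < y i := Iff.rfl

omit [WellFoundedLT I] in
lemma bddSupp_card_le :
    #(BddSupp I A) ≤ sum (fun i : I => #A ^ #{j : I // j < i}) := by
  have hsig : ∀ i : I, #({j : I // j < i} → A) = #A ^ #{j : I // j < i} :=
    fun i => (power_def A {j : I // j < i}).symm
  calc #(BddSupp I A) ≤ #(Σ i : I, ({j : I // j < i} → A)) := by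
        apply mk_le_of_injective
          (f := fun f => ⟨f.2.choose, fun j => ofLex f.1 j.1⟩)
        intro f g hfg
        have h1 : f.2.choose = g.2.choose := congrArg Sigma.fst hfg
        have h2 : (fun j : {j : I // j < f.2.choose} => ofLex f.1 j.1)
            = fun j : {j : I // j < f.2.choose} => ofLex g.1 j.1 := by
          have := (Sigma.mk.inj_iff.1 hfg).2
          rw [← h1] at this
          exact eq_of_heq this
        apply Subtype.ext
        apply ofLex.injective
        funext j
        rcases lt_or_ge j f.2.choose with hj | hj
        · exact congrFun h2 ⟨j, hj⟩
        · rw [f.2.choose_spec j hj, g.2.choose_spec j (h1 ▸ hj)]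
      _ = _ := by
        rw [mk_sigma]
        exact congrArg _ (funext hsig)

lemma lowerSets_card_ge [NoMaxOrder I] :
    #A ^ #I ≤ #{s : Set (BddSupp I A) // IsLowerSet s} := by
  rw [power_def]
  set L := BddSupp I A
  -- the cut below `f`
  set Φ : (I → A) → {s : Set L // IsLowerSet s} := fun f =>
    ⟨{g : L | (g.1 : Lex (∀ _ : I, A)) ≤ toLex f}, by
      intro a b hba ha
      exact le_trans (Subtype.coe_le_coe.2 hba) ha⟩ with hΦ
  apply mk_le_of_injective (f := Φ)
  have key : ∀ f f' : I → A, toLex f < toLex f' → Φ f ≠ Φ f' := by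
    intro f f' hlt hEq
    obtain ⟨i, hag, hi⟩ := (lex_lt_iff f f').1 hlt
    set g : I → A := fun j => if j ≤ i then f' j else ⊥ with hg
    obtain ⟨b, hb⟩ := exists_gt i
    have hgL : toLex g ∈ L := by
      refine ⟨b, fun j hbj => ?_⟩
      exact if_neg (fun h => absurd (hb.trans_le hbj) (not_lt.2 h))
    set gl : L := ⟨toLex g, hgL⟩ with hgl
    have hmem' : gl ∈ (Φ f').1 := by
      show toLex g ≤ toLex f'
      apply Pi.toLex_monotone
      intro j
      by_cases hj : j ≤ i
      · exact (if_pos hj).le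
      · exact (if_neg hj).trans_le bot_le
    have hmem : gl ∉ (Φ f).1 := by
      show ¬ toLex g ≤ toLex f
      apply not_le_of_gt
      refine (lex_lt_iff f g).2 ⟨i, fun j hj => ?_, ?_⟩
      · rw [hag j hj, hg]; exact (if_pos hj.le).symm
      · rw [hg]; simpa using hi
    rw [hEq] at hmem
    exact hmem hmem'
  intro f f' hff
  by_contra hne
  have : toLex f ≠ toLex f' := fun h => hne (toLex.injective.eq_iff.1 h)
  rcases this.lt_or_gt with h | h
  · exact key _ _ h hff
  · exact key _ _ h hff.symm

end Aux

lemma lam_le_powerlt {α lam : Cardinal.{u}} (hα : 2 ≤ α) : lam ≤ α ^< lam := by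
  apply le_of_forall_lt
  intro c hc
  calc c < 2 ^ c := cantor c
    _ ≤ α ^ c := power_le_power_right hα
    _ ≤ α ^< lam := le_powerlt α hc

/-- Let `λ` be an infinite cardinal and `κ = α^{<λ}` for some `α ≥ 2`.  Then
`Ded κ ≥ α^λ`, witnessed by a linear order of cardinality at most `κ = α^{<λ}` with at
least `α^λ` cuts. -/
theorem stmt10 (α lam κ : Cardinal.{u}) (hα : 2 ≤ α) (hlam : ℵ₀ ≤ lam)
    (hκ : κ = α ^< lam) :
    α ^ lam ≤ Ded κ ∧
    ∃ (L : Type u) (_ : LinearOrder L), #L ≤ κ ∧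
      α ^ lam ≤ #{s : Set L // IsLowerSet s} := by
  subst hκ
  set I := lam.ord.ToType with hI
  set A := α.ord.ToType with hA
  have hα0 : (0 : Ordinal) < α.ord := by
    rw [Cardinal.lt_ord]
    simpa using lt_of_lt_of_le two_pos hα
  letI : OrderBot A := Ordinal.toTypeOrderBot hα0.ne'
  haveI : NoMaxOrder I := Cardinal.noMaxOrder hlam
  have hmkA : #A = α := mk_ord_toType α
  have hmkI : #I = lam := mk_ord_toType lam
  have hlamle : lam ≤ α ^< lam := lam_le_powerlt hα
  have hinf : ℵ₀ ≤ α ^< lam := hlam.trans hlamle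
  -- cardinality of L
  have hcard : #(BddSupp I A) ≤ α ^< lam := by
    refine (bddSupp_card_le).trans ?_
    have h1 : sum (fun i : I => #A ^ #{j : I // j < i}) ≤
        sum (fun _ : I => α ^< lam) := by
      apply sum_le_sum
      intro i
      rw [hmkA]
      exact le_powerlt α (mk_Iio_ord_toType i)
    refine h1.trans ?_
    rw [sum_const', hmkI]
    exact (mul_eq_right hinf hlamle (aleph0_pos.trans_le hlam).ne').le
  have hlower : α ^ lam ≤ #{s : Set (BddSupp I A) // IsLowerSet s} := by
    have := lowerSets_card_ge (I := I) (A := A)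
    rwa [hmkA, hmkI] at this
  have hbdd : BddAbove {c : Cardinal.{u} | ∃ (L : Type u) (_ : LinearOrder L),
      #L ≤ α ^< lam ∧ c = #{s : Set L // IsLowerSet s}} := by
    refine ⟨2 ^ (α ^< lam), ?_⟩
    rintro c ⟨L, _, hL, rfl⟩
    calc #{s : Set L // IsLowerSet s} ≤ #(Set L) := mk_subtype_le _
      _ = 2 ^ #L := mk_set
      _ ≤ 2 ^ (α ^< lam) := power_le_power_left two_ne_zero hL
  constructor
  · exact hlower.trans (le_csSup hbdd ⟨BddSupp I A, inferInstance, hcard, rfl⟩)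
  · exact ⟨BddSupp I A, inferInstance, hcard, hlower⟩
end

section
/- For α ≥ 2 and λ infinite cardinals, the set of binary sequences {0,1}^λ with the lexicographic order has cardinality 2^λ, while the subset of eventually-zero sequences (bounded support) has cardinality 2^{<λ} and is dense in {0,1}^λ at every point that is not eventually constant; consequently there is a linear order of cardinality 2^{<λ} whose Dedekind completion has cardinality at least 2^λ. -/
open Cardinal

universe u

theorem auxPow (X : Type u) : #(X → Bool) = 2 ^ #X := by
  simp [Cardinal.mk_arrow]

theorem auxNoMax {ι : Type u} [LinearOrder ι] [WellFoundedLT ι] [Infinite ι]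
    (hcard : ∀ a : ι, #(Set.Iio a) < #ι) (a : ι) : ∃ b, a < b := by
  by_contra h
  push_neg at h
  have : (Set.univ : Set ι) = insert a (Set.Iio a) := by
    ext x
    simp only [Set.mem_univ, Set.mem_insert_iff, Set.mem_Iio, true_iff]
    exact ((h x).lt_or_eq).symm
  have h1 : #ι ≤ #(Set.Iio a) + 1 := by
    rw [← Cardinal.mk_univ, this]
    exact (Cardinal.mk_insert_le).trans le_rfl
  have h2 : #(Set.Iio a) + 1 < #ι :=
    Cardinal.add_lt_of_lt (Cardinal.infinite_iff.1 ‹Infinite ι›) (hcard a)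
      (lt_of_lt_of_le Cardinal.one_lt_aleph0 (Cardinal.infinite_iff.1 ‹Infinite ι›))
  exact absurd (h1.trans_lt h2) (lt_irrefl _)

theorem auxSeg {ι : Type u} [LinearOrder ι] [WellFoundedLT ι]
    {c : Cardinal.{u}} (hc : c < #ι) :
    ∃ a : ι, c ≤ #(Set.Iio a) := by
  have hord : (#ι).ord ≤ Ordinal.type ((· < ·) : ι → ι → Prop) :=
    Cardinal.ord_le.2 (le_of_eq (Ordinal.card_type _).symm)
  have h1 : c.ord < Ordinal.type ((· < ·) : ι → ι → Prop) :=
    lt_of_lt_of_le (Cardinal.ord_lt_ord.2 hc) hord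
  obtain ⟨a, ha⟩ := Ordinal.typein_surj _ h1
  refine ⟨a, ?_⟩
  have : #{ y // y < a } = c := by
    rw [← Ordinal.card_typein (r := ((· < ·) : ι → ι → Prop)), ha, Cardinal.card_ord]
  rw [show (Set.Iio a : Set ι) = {y | y < a} from rfl]
  exact le_of_eq this.symm

theorem auxLe {ι : Type u} [LinearOrder ι] [WellFoundedLT ι] [Infinite ι] :
    Cardinal.mk ι ≤ 2 ^< #ι := by
  by_contra h
  push_neg at h
  have := Cardinal.le_powerlt 2 h
  exact absurd (lt_of_lt_of_le (Cardinal.cantor _) this) (lt_irrefl _)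

theorem auxCardS {ι : Type u} [LinearOrder ι] [WellFoundedLT ι] [Infinite ι]
    (hcard : ∀ a : ι, #(Set.Iio a) < #ι) :
    #{f : ι → Bool | ∃ α, ∀ i, α ≤ i → f i = false} = 2 ^< #ι := by
  have hIota : ℵ₀ ≤ #ι := Cardinal.infinite_iff.1 ‹Infinite ι›
  have hpl : #ι ≤ 2 ^< #ι := auxLe
  apply le_antisymm
  · have hinj : #{f : ι → Bool | ∃ α, ∀ i, α ≤ i → f i = false} ≤
        #(Σ a : ι, (Set.Iio a → Bool)) := by
      refine Cardinal.mk_le_of_injective (f := fun x =>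
        ⟨x.2.choose, fun i => x.1 i.1⟩) ?_
      rintro ⟨f, hf⟩ ⟨g, hg⟩ h
      obtain ⟨h1, h2⟩ := Sigma.mk.inj_iff.1 h
      rw [h1] at h2
      have h2' := eq_of_heq h2
      ext1
      funext i
      show f i = g i
      rcases lt_or_ge i hg.choose with hi | hi
      · exact congrFun h2' ⟨i, hi⟩
      · have hi' : hf.choose ≤ i := h1 ▸ hi
        rw [hf.choose_spec i hi', hg.choose_spec i hi]
    refine hinj.trans ?_
    rw [Cardinal.mk_sigma]
    have : (Cardinal.sum fun a : ι => #(Set.Iio a → Bool)) ≤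
        Cardinal.sum fun _ : ι => 2 ^< #ι := by
      refine Cardinal.sum_le_sum _ _ fun a => ?_
      rw [auxPow]
      exact Cardinal.le_powerlt 2 (hcard a)
    refine this.trans ?_
    rw [Cardinal.sum_const']
    calc #ι * 2 ^< #ι ≤ (2 ^< #ι) * (2 ^< #ι) := mul_le_mul_left hpl _
      _ = 2 ^< #ι := Cardinal.mul_eq_self (hIota.trans hpl)
  · rw [Cardinal.powerlt_le]
    intro c hc
    obtain ⟨a, ha⟩ := auxSeg hc
    have h1 : (2 : Cardinal) ^ c ≤ 2 ^ #(Set.Iio a) :=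
      Cardinal.power_le_power_left two_ne_zero ha
    refine h1.trans ?_
    rw [← auxPow]
    refine Cardinal.mk_le_of_injective (f := fun f =>
      (⟨fun i => if h : i < a then f ⟨i, h⟩ else false,
        ⟨a, fun i hi => dif_neg (not_lt.2 hi)⟩⟩ :
        {f : ι → Bool | ∃ α, ∀ i, α ≤ i → f i = false})) ?_
    intro f g h
    funext j
    have := congrFun (Subtype.ext_iff.1 h) j.1
    dsimp only at this
    have hj : j.1 < a := j.2
    rw [dif_pos hj, dif_pos hj] at this
    exact this

theorem auxDense {ι : Type u} [LinearOrder ι] [WellFoundedLT ι]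
    (f : ι → Bool) (hT : ∀ α, ∃ i, α ≤ i ∧ f i = true) (hF : ∀ α, ∃ i, α ≤ i ∧ f i = false)
    (g : ι → Bool) (hg : lexLt g f) :
    ∃ m : ι → Bool, (∃ α, ∀ i, α ≤ i → m i = false) ∧ lexLt g m ∧ lexLt m f := by
  obtain ⟨n, hag, hlt⟩ := hg
  obtain ⟨hgn, hfn⟩ := Bool.lt_iff.1 hlt
  obtain ⟨j, hnj, hfj⟩ := hF n
  have hnj' : n < j := lt_of_le_of_ne hnj (by rintro rfl; rw [hfn] at hfj; cases hfj)
  obtain ⟨it, hjit, hfit⟩ := hT j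
  obtain ⟨k, ⟨hjk, hfk⟩, hkmin⟩ := (wellFounded_lt (α := ι)).has_min
      {i | j ≤ i ∧ f i = true} ⟨it, hjit, hfit⟩
  refine ⟨fun i => if i < j then f i else false,
    ⟨j, fun i hi => if_neg (not_lt.2 hi)⟩, ⟨n, fun i hi => ?_, ?_⟩, ⟨k, fun i hi => ?_, ?_⟩⟩
  · show g i = if i < j then f i else false
    rw [hag i hi, if_pos (hi.trans hnj')]
  · show g n < if n < j then f n else false
    rw [hgn, if_pos hnj', hfn]; exact Bool.false_lt_true
  · show (if i < j then f i else false) = f i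
    by_cases hij : i < j
    · rw [if_pos hij]
    · rw [if_neg hij]
      cases h : f i with
      | false => rfl
      | true => exact absurd hi (hkmin i ⟨not_lt.1 hij, h⟩)
  · show (if k < j then f k else false) < f k
    rw [if_neg (not_lt.2 hjk), hfk]; exact Bool.false_lt_true

/-- The boundedly-supported sequences with the lexicographic order. -/
noncomputable abbrev LL (ι : Type u) [LinearOrder ι] [WellFoundedLT ι] : Type u :=
  {f : Lex (ι → Bool) // ∃ α : ι, ∀ i, α ≤ i → ofLex f i = false}

theorem auxCut {ι : Type u} [LinearOrder ι] [WellFoundedLT ι] [Infinite ι]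
    (hcard : ∀ a : ι, #(Set.Iio a) < #ι) {f g : ι → Bool}
    (hfg : toLex f < toLex g) :
    ∃ m : LL ι, (m : Lex (ι → Bool)) ≤ toLex g ∧ ¬ ((m : Lex (ι → Bool)) ≤ toLex f) := by
  obtain ⟨n, hagree, hn⟩ := hfg
  obtain ⟨hfn, hgn⟩ := Bool.lt_iff.1 hn
  obtain ⟨b, hb⟩ := auxNoMax hcard n
  set m0 : ι → Bool := fun i => if i ≤ n then g i else false with hm0
  have hmem : ∃ α : ι, ∀ i, α ≤ i → ofLex (toLex m0) i = false := by
    refine ⟨b, fun i hi => ?_⟩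
    show (if i ≤ n then g i else false) = false
    exact if_neg (fun h => absurd (hb.trans_le hi) (not_lt.2 h))
  refine ⟨⟨toLex m0, hmem⟩, ?_, ?_⟩
  · by_cases h : ∀ i, n < i → g i = false
    · refine le_of_eq (congrArg toLex (funext fun i => ?_))
      show (if i ≤ n then g i else false) = g i
      rcases le_or_gt i n with hi | hi
      · rw [if_pos hi]
      · rw [if_neg (not_le.2 hi), h i hi]
    · push_neg at h
      obtain ⟨i0, hi0, hgi0⟩ := h
      obtain ⟨k, ⟨hnk, hgk⟩, hkmin⟩ := (wellFounded_lt (α := ι)).has_min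
        {i | n < i ∧ g i = true} ⟨i0, hi0, by simpa using hgi0⟩
      refine le_of_lt ⟨k, fun i hik => ?_, ?_⟩
      · show (if i ≤ n then g i else false) = g i
        rcases le_or_gt i n with hi | hi
        · rw [if_pos hi]
        · rw [if_neg (not_le.2 hi)]
          cases hgi : g i with
          | false => rfl
          | true => exact absurd hik (hkmin i ⟨hi, hgi⟩)
      · show (if k ≤ n then g k else false) < g k
        rw [if_neg (not_le.2 hnk), hgk]
        exact Bool.false_lt_true
  · refine not_le.2 ⟨n, fun i hi => ?_, ?_⟩
    · show f i = if i ≤ n then g i else false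
      rw [if_pos hi.le]
      exact hagree i hi
    · show f n < if n ≤ n then g n else false
      rw [if_pos le_rfl]
      exact hn

theorem auxFinal {ι : Type u} [LinearOrder ι] [WellFoundedLT ι] [Infinite ι]
    (hcard : ∀ a : ι, #(Set.Iio a) < #ι) :
    2 ^ #ι ≤ #{s : Set (LL ι) // IsLowerSet s} := by
  have key : ∀ f : ι → Bool,
      IsLowerSet {m : LL ι | (m : Lex (ι → Bool)) ≤ toLex f} := by
    intro f m m' hle hm
    exact le_trans (Subtype.coe_le_coe.2 hle) hm
  have hinj : Function.Injective (fun f : ι → Bool =>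
      (⟨{m : LL ι | (m : Lex (ι → Bool)) ≤ toLex f}, key f⟩ :
        {s : Set (LL ι) // IsLowerSet s})) := by
    intro f g h
    by_contra hne
    have hsets := Subtype.ext_iff.1 h
    dsimp only at hsets
    rcases lt_trichotomy (toLex f) (toLex g) with h1 | h1 | h1
    · obtain ⟨m, hm1, hm2⟩ := auxCut hcard h1
      have : m ∈ {m : LL ι | (m : Lex (ι → Bool)) ≤ toLex f} := hsets ▸ hm1
      exact hm2 this
    · exact hne (toLex.injective h1)
    · obtain ⟨m, hm1, hm2⟩ := auxCut hcard h1
      have : m ∈ {m : LL ι | (m : Lex (ι → Bool)) ≤ toLex g} := hsets ▸ hm1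
      exact hm2 this
  calc (2 : Cardinal) ^ #ι = #(ι → Bool) := (auxPow ι).symm
    _ ≤ #{s : Set (LL ι) // IsLowerSet s} := Cardinal.mk_le_of_injective hinj

/-- Let `λ` be an infinite cardinal (encoded as an infinite well-ordered type `ι` with
all proper initial segments of cardinality `< #ι`).  The set `{0,1}^λ` of binary
sequences has cardinality `2^λ`; the subset of boundedly-supported (eventually-zero)
sequences has cardinality `2^{<λ}` and is dense below every sequence that is not
eventually constant; consequently there is a linear order of cardinality `2^{<λ}`
with at least `2^λ` Dedekind cuts. -/
theorem stmt11 {ι : Type u} [LinearOrder ι] [WellFoundedLT ι] [Infinite ι]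
    (hcard : ∀ a : ι, #(Set.Iio a) < #ι) :
    #(ι → Bool) = 2 ^ #ι ∧
    #{f : ι → Bool | ∃ α, ∀ i, α ≤ i → f i = false} = 2 ^< #ι ∧
    (∀ f : ι → Bool, (∀ α, ∃ i, α ≤ i ∧ f i = true) → (∀ α, ∃ i, α ≤ i ∧ f i = false) →
      ∀ g : ι → Bool, lexLt g f →
        ∃ m : ι → Bool, (∃ α, ∀ i, α ≤ i → m i = false) ∧ lexLt g m ∧ lexLt m f) ∧
    ∃ (L : Type u) (_ : LinearOrder L), #L = 2 ^< #ι ∧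
      2 ^ #ι ≤ #{s : Set L // IsLowerSet s} := by
  refine ⟨auxPow ι, auxCardS hcard, fun f hT hF g hg => auxDense f hT hF g hg,
    LL ι, inferInstance, ?_, auxFinal hcard⟩
  have hEq : #(LL ι) = #{f : ι → Bool | ∃ α, ∀ i, α ≤ i → f i = false} :=
    Cardinal.mk_congr ⟨fun x => ⟨ofLex x.1, x.2⟩, fun x => ⟨toLex x.1, x.2⟩,
      fun x => rfl, fun x => rfl⟩
  rw [hEq, auxCardS hcard]
end

section
/- Let G be a linearly ordered abelian group, Q a dense subgroup, λ an infinite cardinal, and d ∈ G^λ an element all of whose coordinates beyond some index m < λ lie in Q. Set b = the truncation of d to its first m coordinates (an element of G^{<λ}). Then for every e ∈ G^λ with d < e there exists an element of b + Q^{<λ} strictly between d and e. -/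
/-- Let `G` be a linearly ordered abelian group, `Q` a dense subgroup, and `d ∈ G^λ`
with all coordinates beyond `m` in `Q`.  Let `b` be the truncation of `d` to its first
`m` coordinates.  Then for every `e > d` (lexicographically) there is `c` with
coordinates in `Q` and support contained in `[0, n]` for some `n`, such that
`d < b + c < e`: an element of `b + Q^{<λ}` lies strictly between `d` and `e`. -/
theorem stmt13 {ι G : Type*} [LinearOrder ι] [WellFoundedLT ι] [Infinite ι]
    [AddCommGroup G] [LinearOrder G] [IsOrderedAddMonoid G] (Q : AddSubgroup G)
    (hdense : ∀ g : G, 0 < g → ∃ q ∈ Q, 0 < q ∧ q < g)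
    (m : ι) (d : ι → G) (hd : ∀ i, m ≤ i → d i ∈ Q)
    (b : ι → G) (hb1 : ∀ i, i < m → b i = d i) (hb2 : ∀ i, m ≤ i → b i = 0)
    (e : ι → G) (hde : lexLt d e) :
    ∃ c : ι → G, (∀ i, c i ∈ Q) ∧ (∃ n, ∀ i, n < i → c i = 0) ∧
      lexLt d (b + c) ∧ lexLt (b + c) e := by
  obtain ⟨n, hn, hlt⟩ := hde
  obtain ⟨q, hqQ, hq0, hqe⟩ := hdense _ (sub_pos.mpr hlt)
  have hdb : ∀ i, d i - b i ∈ Q := by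
    intro i
    rcases lt_or_ge i m with h | h
    · rw [hb1 i h, sub_self]; exact zero_mem Q
    · rw [hb2 i h, sub_zero]; exact hd i h
  refine ⟨fun i => if i < n then d i - b i else if i = n then d n - b n + q else 0,
    ?_, ⟨n, ?_⟩, ⟨n, ?_, ?_⟩, ⟨n, ?_, ?_⟩⟩
  · intro i
    rcases lt_trichotomy i n with h | h | h
    · simpa [h] using hdb i
    · simpa [h] using add_mem (hdb n) hqQ
    · dsimp only
      rw [if_neg (not_lt.mpr h.le), if_neg h.ne']
      exact zero_mem Q
  · intro i hi
    dsimp only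
    rw [if_neg (not_lt.mpr hi.le), if_neg hi.ne']
  · intro i hi
    simp [Pi.add_apply, hi]
  · simp only [Pi.add_apply]
    rw [if_neg (lt_irrefl n), if_pos trivial]
    have h : b n + (d n - b n + q) = d n + q := by abel
    rw [h]
    exact lt_add_of_pos_right _ hq0
  · intro i hi
    simp [Pi.add_apply, hi, hn i hi]
  · simp only [Pi.add_apply]
    rw [if_neg (lt_irrefl n), if_pos trivial]
    have h : b n + (d n - b n + q) = d n + q := by abel
    rw [h]
    exact lt_sub_iff_add_lt'.mp hqe
end

section
/- Let M ≺ N be an elementary extension of o-minimal structures. If for every a ∈ N \ M and every finite tuple b̄ from M, the cut of a over dcl(b̄) does not generate the cut of a over M (i.e., no finite subset of M determines tp(a/M)), then N is a small extension of M: every type over a finite subset of M realized in N is already realized in M. -/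
open FirstOrder FirstOrder.Language

/-- A subset of a linear order is a finite union of points and open intervals with
endpoints in `M ∪ {-∞, +∞}`. -/
def IsFinUnionIntervals {M : Type*} [LinearOrder M] (S : Set M) : Prop :=
  ∃ (P : Finset M) (I : Finset (WithBot M × WithTop M)),
    S = ↑P ∪ ⋃ p ∈ I, {x : M | p.1 < (x : WithBot M) ∧ (x : WithTop M) < p.2}

/-- An ordered `L`-structure is o-minimal if every subset defined by a formula in one
free variable with parameters is a finite union of points and intervals. -/
def IsOMinimalStructure (L : Language) (M : Type*) [LinearOrder M] [L.Structure M] :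
    Prop :=
  ∀ (n : ℕ) (φ : L.Formula (Fin n ⊕ Unit)) (v : Fin n → M),
    IsFinUnionIntervals {x : M | φ.Realize (Sum.elim v fun _ => x)}

namespace OMin

variable {M : Type*} [LinearOrder M]

def Blk (S : Set M) (x y : M) : Prop :=
  ∀ z, min x y ≤ z → z ≤ max x y → (z ∈ S ↔ x ∈ S)

def JumpSet (S : Set M) : Set M :=
  {x | ((∃ w, w < x) ∧ ∀ w, w < x → ¬ Blk S x w) ∨
       ((∃ w, x < w) ∧ ∀ w, x < w → ¬ Blk S x w)}

theorem blk_refl (S : Set M) (x : M) : Blk S x x := fun _ h1 h2 => by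
  simp only [min_self, max_self] at h1 h2
  rw [le_antisymm h2 h1]

theorem blk_mem {S : Set M} {x y : M} (h : Blk S x y) : y ∈ S ↔ x ∈ S :=
  h y (min_le_right _ _) (le_max_right _ _)

theorem blk_symm {S : Set M} {x y : M} (h : Blk S x y) : Blk S y x := by
  intro z h1 h2
  rw [min_comm y x] at h1; rw [max_comm y x] at h2
  rw [h z h1 h2, blk_mem h]

theorem blk_trans {S : Set M} {x y w : M} (hxy : Blk S x y) (hyw : Blk S y w) :
    Blk S x w := by
  intro z h1 h2
  rcases le_or_gt (min x y) z with hz1 | hz1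
  · rcases le_or_gt z (max x y) with hz2 | hz2
    · exact hxy z hz1 hz2
    · have hzx : x < z := lt_of_le_of_lt (le_max_left x y) hz2
      have hzy : y < z := lt_of_le_of_lt (le_max_right x y) hz2
      have hzw : z ≤ w := by
        rcases max_cases x w with ⟨he, _⟩ | ⟨he, _⟩
        · rw [he] at h2; exact absurd (lt_of_lt_of_le hzx h2) (lt_irrefl x)
        · rw [he] at h2; exact h2
      rw [hyw z (le_trans (min_le_left y w) (le_of_lt hzy))
        (le_trans hzw (le_max_right y w)), blk_mem hxy]
  · have hzx : z < x := lt_of_lt_of_le hz1 (min_le_left x y)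
    have hzy : z < y := lt_of_lt_of_le hz1 (min_le_right x y)
    have hwz : w ≤ z := by
      rcases min_cases x w with ⟨he, _⟩ | ⟨he, _⟩
      · rw [he] at h1; exact absurd (lt_of_le_of_lt h1 hzx) (lt_irrefl x)
      · rw [he] at h1; exact h1
    rw [hyw z (le_trans (min_le_right y w) hwz)
      (le_trans (le_of_lt hzy) (le_max_left y w)), blk_mem hxy]

theorem blk_compl {S : Set M} {x y : M} : Blk Sᶜ x y ↔ Blk S x y := by
  constructor <;> intro h z h1 h2 <;> have := h z h1 h2 <;>
    simp only [Set.mem_compl_iff] at * <;> tauto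

theorem jumpSet_compl (S : Set M) : JumpSet Sᶜ = JumpSet S := by
  ext x
  unfold JumpSet
  simp only [Set.mem_setOf_eq, blk_compl]

theorem blk_of_interval {S : Set M} {d : WithBot M} {e : WithTop M} {c : Prop}
    (hc : ∀ z : M, d < ↑z → ↑z < e → (z ∈ S ↔ c)) {x y : M}
    (hx1 : d < ↑x) (hx2 : ↑x < e) (hy1 : d < ↑y) (hy2 : ↑y < e) : Blk S x y := by
  intro z h1 h2
  have hz1 : d < ↑z := by
    rcases min_cases x y with ⟨he, _⟩ | ⟨he, _⟩ <;> rw [he] at h1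
    · exact lt_of_lt_of_le hx1 (WithBot.coe_le_coe.mpr h1)
    · exact lt_of_lt_of_le hy1 (WithBot.coe_le_coe.mpr h1)
  have hz2 : (↑z : WithTop M) < e := by
    rcases max_cases x y with ⟨he, _⟩ | ⟨he, _⟩ <;> rw [he] at h2
    · exact lt_of_le_of_lt (WithTop.coe_le_coe.mpr h2) hx2
    · exact lt_of_le_of_lt (WithTop.coe_le_coe.mpr h2) hy2
  rw [hc z hz1 hz2]
  exact (hc x hx1 hx2).symm

theorem aux_jump {S : Set M} (hS : IsFinUnionIntervals S) (hSc : IsFinUnionIntervals Sᶜ)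
    {x y : M} (hxy : x < y) (hxS : x ∈ S) (hyS : y ∉ S) :
    ∃ z, x ≤ z ∧ z ≤ y ∧ z ∈ JumpSet S := by
  classical
  obtain ⟨P, I, hPI⟩ := hS
  obtain ⟨P', I', hPI'⟩ := hSc
  set X := {w | Blk S x w} with hXdef
  have hxX : x ∈ X := blk_refl S x
  have memS_of_X : ∀ w ∈ X, w ∈ S := fun w hw => (blk_mem hw).mpr hxS
  by_cases hmax : ∃ m ∈ X, ∀ w ∈ X, w ≤ m
  · obtain ⟨m, hmX, hm⟩ := hmax
    have hxm : x ≤ m := hm x hxX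
    have hmy : m < y := by
      by_contra hc; push_neg at hc
      refine hyS ((hmX y ?_ ?_).mpr hxS)
      · rw [min_eq_left hxm]; exact le_of_lt hxy
      · rw [max_eq_right hxm]; exact hc
    refine ⟨m, hxm, le_of_lt hmy, Or.inr ⟨⟨y, hmy⟩, ?_⟩⟩
    intro w hw hBlk
    exact absurd (hm w (blk_trans hmX hBlk)) (not_le.mpr hw)
  · push_neg at hmax
    set U := {v | ∀ w ∈ X, w < v} with hUdef
    have hyU : y ∈ U := by
      intro w hw
      by_contra hc; push_neg at hc
      have hxw : x ≤ w := le_trans (le_of_lt hxy) hc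
      refine hyS ((hw y ?_ ?_).mpr hxS)
      · rw [min_eq_left hxw]; exact le_of_lt hxy
      · rw [max_eq_right hxw]; exact hc
    set F := ((↑P ∪ ↑P' : Set M) ∪
      {m | ∃ p ∈ I ∪ I', p.1 = (↑m : WithBot M) ∨ p.2 = (↑m : WithTop M)}) with hFdef
    have C1 : ∀ v ∈ U, v ∉ F → ∃ v', v' ∈ U ∧ v' ∈ F ∧ v' < v := by
      intro v hvU hvF
      have hxv : x < v := hvU x hxX
      have hvX : v ∉ X := fun hvX => absurd (hvU v hvX) (lt_irrefl v)
      by_cases hvS : v ∈ S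
      · rw [hPI] at hvS
        rcases hvS with hvP | hvI
        · exact absurd (Or.inl (Or.inl hvP)) hvF
        · simp only [Set.mem_iUnion, Set.mem_setOf_eq] at hvI
          obtain ⟨p, hpI, hv1, hv2⟩ := hvI
          have hsub : ∀ z : M, p.1 < ↑z → ↑z < p.2 → (z ∈ S ↔ True) := by
            intro z hz1 hz2
            refine iff_of_true ?_ trivial
            rw [hPI]; right
            simp only [Set.mem_iUnion, Set.mem_setOf_eq]
            exact ⟨p, hpI, hz1, hz2⟩
          rcases lt_or_ge p.1 (↑x : WithBot M) with hpx | hpx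
          · exact absurd (blk_of_interval hsub hpx (lt_trans (WithTop.coe_lt_coe.mpr hxv) hv2)
              hv1 hv2) hvX
          · have hp1ne : p.1 ≠ ⊥ := (lt_of_lt_of_le (WithBot.bot_lt_coe x) hpx).ne'
            obtain ⟨m', hm'⟩ := WithBot.ne_bot_iff_exists.mp hp1ne
            have hm'v : m' < v := WithBot.coe_lt_coe.mp (hm' ▸ hv1)
            have hm'U : m' ∈ U := by
              intro w hwX
              by_contra hcw; push_neg at hcw
              obtain ⟨w₂, hw₂X, hw₂⟩ : ∃ w₂ ∈ X, m' < w₂ := by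
                rcases eq_or_lt_of_le hcw with heq | hlt
                · obtain ⟨w₃, hw₃X, h3⟩ := hmax w hwX
                  exact ⟨w₃, hw₃X, heq ▸ h3⟩
                · exact ⟨w, hwX, hlt⟩
              have hw₂v : w₂ < v := hvU w₂ hw₂X
              have hB : Blk S w₂ v := blk_of_interval hsub
                (hm' ▸ WithBot.coe_lt_coe.mpr hw₂)
                (lt_trans (WithTop.coe_lt_coe.mpr hw₂v) hv2) hv1 hv2
              exact absurd (hvU v (blk_trans hw₂X hB)) (lt_irrefl v)
            exact ⟨m', hm'U, Or.inr ⟨p, Finset.mem_union_left _ hpI, Or.inl hm'.symm⟩, hm'v⟩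
      · have hvSc : v ∈ Sᶜ := hvS
        rw [hPI'] at hvSc
        rcases hvSc with hvP | hvI
        · exact absurd (Or.inl (Or.inr hvP)) hvF
        · simp only [Set.mem_iUnion, Set.mem_setOf_eq] at hvI
          obtain ⟨p, hpI, hv1, hv2⟩ := hvI
          have hsub : ∀ z : M, p.1 < ↑z → ↑z < p.2 → (z ∈ S ↔ False) := by
            intro z hz1 hz2
            refine iff_of_false ?_ not_false
            have : z ∈ Sᶜ := by
              rw [hPI']; right
              simp only [Set.mem_iUnion, Set.mem_setOf_eq]
              exact ⟨p, hpI, hz1, hz2⟩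
            exact this
          rcases lt_or_ge p.1 (↑x : WithBot M) with hpx | hpx
          · exact ((hsub x hpx (lt_trans (WithTop.coe_lt_coe.mpr hxv) hv2)).mp hxS).elim
          · have hp1ne : p.1 ≠ ⊥ := (lt_of_lt_of_le (WithBot.bot_lt_coe x) hpx).ne'
            obtain ⟨m', hm'⟩ := WithBot.ne_bot_iff_exists.mp hp1ne
            have hm'v : m' < v := WithBot.coe_lt_coe.mp (hm' ▸ hv1)
            have hm'U : m' ∈ U := by
              intro w hwX
              by_contra hcw; push_neg at hcw
              obtain ⟨w₂, hw₂X, hw₂⟩ : ∃ w₂ ∈ X, m' < w₂ := by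
                rcases eq_or_lt_of_le hcw with heq | hlt
                · obtain ⟨w₃, hw₃X, h3⟩ := hmax w hwX
                  exact ⟨w₃, hw₃X, heq ▸ h3⟩
                · exact ⟨w, hwX, hlt⟩
              have hw₂v : w₂ < v := hvU w₂ hw₂X
              exact (hsub w₂ (hm' ▸ WithBot.coe_lt_coe.mpr hw₂)
                (lt_trans (WithTop.coe_lt_coe.mpr hw₂v) hv2)).mp (memS_of_X w₂ hw₂X)
            exact ⟨m', hm'U, Or.inr ⟨p, Finset.mem_union_right _ hpI, Or.inl hm'.symm⟩, hm'v⟩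
    have hFfin : F.Finite := by
      refine Set.Finite.union (Set.Finite.union P.finite_toSet P'.finite_toSet) ?_
      have hsub : {m : M | ∃ p ∈ I ∪ I', p.1 = (↑m : WithBot M) ∨ p.2 = (↑m : WithTop M)} ⊆
          ⋃ p ∈ (I ∪ I' : Finset (WithBot M × WithTop M)),
            ({m : M | p.1 = (↑m : WithBot M)} ∪ {m : M | p.2 = (↑m : WithTop M)}) := by
        intro m hm
        obtain ⟨p, hp, hor⟩ := hm
        simp only [Set.mem_iUnion]
        exact ⟨p, hp, hor⟩
      refine Set.Finite.subset (Set.Finite.biUnion (I ∪ I').finite_toSet fun p _ => ?_) hsub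
      refine Set.Finite.union ?_ ?_
      · refine Set.Subsingleton.finite fun m1 h1 m2 h2 => ?_
        exact WithBot.coe_injective (h1.symm.trans h2 :)
      · refine Set.Subsingleton.finite fun m1 h1 m2 h2 => ?_
        exact WithTop.coe_injective (h1.symm.trans h2 :)
    have hUFfin : (U ∩ F).Finite := hFfin.subset Set.inter_subset_right
    have hUFne : (U ∩ F).Nonempty := by
      by_cases hyF : y ∈ F
      · exact ⟨y, hyU, hyF⟩
      · obtain ⟨v', h1, h2, _⟩ := C1 y hyU hyF
        exact ⟨v', h1, h2⟩
    have hTne : hUFfin.toFinset.Nonempty := (Set.Finite.toFinset_nonempty _).mpr hUFne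
    set m := hUFfin.toFinset.min' hTne with hmdef
    have hmUF : m ∈ U ∩ F := by
      have := hUFfin.toFinset.min'_mem hTne
      rwa [Set.Finite.mem_toFinset] at this
    have hmU : m ∈ U := hmUF.1
    have hmin : ∀ v ∈ U, m ≤ v := by
      intro v hv
      by_contra hc; push_neg at hc
      by_cases hvF : v ∈ F
      · exact absurd (hUFfin.toFinset.min'_le v (by rw [Set.Finite.mem_toFinset]; exact ⟨hv, hvF⟩))
          (not_le.mpr hc)
      · obtain ⟨v', hv'U, hv'F, hv'v⟩ := C1 v hv hvF
        have : m ≤ v' := hUFfin.toFinset.min'_le v'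
          (by rw [Set.Finite.mem_toFinset]; exact ⟨hv'U, hv'F⟩)
        exact absurd (lt_trans (lt_of_le_of_lt this hv'v) hc) (lt_irrefl m)
    have hxm : x < m := hmU x hxX
    have hmy : m ≤ y := hmin y hyU
    refine ⟨m, le_of_lt hxm, hmy, Or.inl ⟨⟨x, hxm⟩, ?_⟩⟩
    intro w hwm hBlk
    have hwU : w ∉ U := fun hwU => absurd (hmin w hwU) (not_le.mpr hwm)
    obtain ⟨w', hw'X, hww'⟩ : ∃ w' ∈ X, w ≤ w' := by
      simp only [hUdef, Set.mem_setOf_eq] at hwU; push_neg at hwU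
      obtain ⟨w', h1, h2⟩ := hwU
      exact ⟨w', h1, h2⟩
    have hw'm : w' < m := hmU w' hw'X
    have hBw'm : Blk S w' m := by
      intro z h1 h2
      rw [min_eq_left (le_of_lt hw'm)] at h1
      rw [max_eq_right (le_of_lt hw'm)] at h2
      have h1' : min m w ≤ z := by
        rw [min_eq_right (le_of_lt hwm)]; exact le_trans hww' h1
      have h2' : z ≤ max m w := by
        rw [max_eq_left (le_of_lt hwm)]; exact h2
      rw [hBlk z h1' h2']
      exact (hBlk w' (by rw [min_eq_right (le_of_lt hwm)]; exact hww')
        (by rw [max_eq_left (le_of_lt hwm)]; exact le_of_lt hw'm)).symm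
    exact absurd (hmU m (blk_trans hw'X hBw'm)) (lt_irrefl m)

theorem key_const {S : Set M} (hS : IsFinUnionIntervals S) (hSc : IsFinUnionIntervals Sᶜ)
    {x y : M} (hxy : x ≤ y) (hno : ∀ z, x ≤ z → z ≤ y → z ∉ JumpSet S) :
    (x ∈ S ↔ y ∈ S) := by
  by_contra hne
  by_cases hxS : x ∈ S
  · have hyS : y ∉ S := fun h => hne ⟨fun _ => h, fun _ => hxS⟩
    have hxy' : x < y := lt_of_le_of_ne hxy (by rintro rfl; exact hyS hxS)
    obtain ⟨z, h1, h2, h3⟩ := aux_jump hS hSc hxy' hxS hyS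
    exact hno z h1 h2 h3
  · have hyS : y ∈ S := by tauto
    have hxy' : x < y := lt_of_le_of_ne hxy (by rintro rfl; exact hxS hyS)
    obtain ⟨z, h1, h2, h3⟩ := aux_jump (S := Sᶜ) hSc (by rwa [compl_compl]) hxy'
      hxS (by simpa using hyS)
    rw [jumpSet_compl] at h3
    exact hno z h1 h2 h3

theorem jumpSet_finite {S : Set M} (hS : IsFinUnionIntervals S)
    (hSc : IsFinUnionIntervals Sᶜ) : (JumpSet S).Finite := by
  classical
  obtain ⟨P, I, hPI⟩ := hS
  obtain ⟨P', I', hPI'⟩ := hSc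
  have claim : ∀ m : M, m ∉ (↑P ∪ ↑P' : Set M) → ∃ p ∈ I ∪ I',
      ((p.1 < (↑m : WithBot M) ∧ (↑m : WithTop M) < p.2) ∧
      ∀ z : M, p.1 < ↑z → ↑z < p.2 → (z ∈ S ↔ m ∈ S)) := by
    intro m hm
    by_cases hmS : m ∈ S
    · have hmm := hmS; rw [hPI] at hmm
      rcases hmm with hp | hp
      · exact absurd (Or.inl hp) hm
      · simp only [Set.mem_iUnion, Set.mem_setOf_eq] at hp
        obtain ⟨p, hpI, h1, h2⟩ := hp
        refine ⟨p, Finset.mem_union_left _ hpI, ⟨h1, h2⟩, fun z hz1 hz2 => ?_⟩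
        refine iff_of_true ?_ hmS
        rw [hPI]; right
        simp only [Set.mem_iUnion, Set.mem_setOf_eq]
        exact ⟨p, hpI, hz1, hz2⟩
    · have hmc : m ∈ Sᶜ := hmS
      rw [hPI'] at hmc
      rcases hmc with hp | hp
      · exact absurd (Or.inr hp) hm
      · simp only [Set.mem_iUnion, Set.mem_setOf_eq] at hp
        obtain ⟨p, hpI, h1, h2⟩ := hp
        refine ⟨p, Finset.mem_union_right _ hpI, ⟨h1, h2⟩, fun z hz1 hz2 => ?_⟩
        refine iff_of_false ?_ hmS
        have : z ∈ Sᶜ := by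
          rw [hPI']; right
          simp only [Set.mem_iUnion, Set.mem_setOf_eq]
          exact ⟨p, hpI, hz1, hz2⟩
        exact this
  set f : M → M ⊕ (WithBot M × WithTop M) := fun m =>
    if h : m ∈ (↑P ∪ ↑P' : Set M) then Sum.inl m
    else Sum.inr (Classical.choose (claim m h)) with hf
  have main : ∀ T : Set M,
      (∀ m₁ ∈ T, ∀ m₂ ∈ T, m₁ ≠ m₂ → ¬ Blk S m₁ m₂) → T.Finite := by
    intro T hTblk
    refine Set.Finite.of_finite_image (f := f) ?_ ?_
    · refine Set.Finite.subset (Set.Finite.union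
        ((P.finite_toSet.union P'.finite_toSet).image Sum.inl)
        (((I ∪ I').finite_toSet).image Sum.inr)) ?_
      rintro _ ⟨m, _, rfl⟩
      by_cases hm : m ∈ (↑P ∪ ↑P' : Set M)
      · rw [hf]; dsimp only; rw [dif_pos hm]
        exact Or.inl ⟨m, hm, rfl⟩
      · rw [hf]; dsimp only; rw [dif_neg hm]
        exact Or.inr ⟨_, (Classical.choose_spec (claim m hm)).1, rfl⟩
    · intro m₁ h₁ m₂ h₂ heq
      by_contra hne
      have hnB := hTblk m₁ h₁ m₂ h₂ hne
      rw [hf] at heq; dsimp only at heq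
      by_cases ha : m₁ ∈ (↑P ∪ ↑P' : Set M) <;> by_cases hb : m₂ ∈ (↑P ∪ ↑P' : Set M)
      · rw [dif_pos ha, dif_pos hb] at heq
        exact hne (Sum.inl.injEq _ _ ▸ heq)
      · rw [dif_pos ha, dif_neg hb] at heq; exact Sum.inl_ne_inr heq
      · rw [dif_neg ha, dif_pos hb] at heq; exact Sum.inr_ne_inl heq
      · rw [dif_neg ha, dif_neg hb] at heq
        have hp := Sum.inr_injective heq
        obtain ⟨-, ⟨ha1, ha2⟩, hconst⟩ := Classical.choose_spec (claim m₁ ha)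
        obtain ⟨-, ⟨hb1, hb2⟩, -⟩ := Classical.choose_spec (claim m₂ hb)
        rw [← hp] at hb1 hb2
        exact hnB (blk_of_interval hconst ha1 ha2 hb1 hb2)
  have hunion : JumpSet S ⊆
      {x | (∃ w, w < x) ∧ ∀ w, w < x → ¬ Blk S x w} ∪
      {x | (∃ w, x < w) ∧ ∀ w, x < w → ¬ Blk S x w} := by
    intro x hx
    rcases hx with h | h
    · exact Or.inl h
    · exact Or.inr h
  refine Set.Finite.subset (Set.Finite.union (main _ ?_) (main _ ?_)) hunion
  · intro m₁ h₁ m₂ h₂ hne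
    rcases lt_or_gt_of_ne hne with hlt | hgt
    · intro hB; exact h₂.2 m₁ hlt (blk_symm hB)
    · exact h₁.2 m₂ hgt
  · intro m₁ h₁ m₂ h₂ hne
    rcases lt_or_gt_of_ne hne with hlt | hgt
    · exact h₁.2 m₂ hlt
    · intro hB; exact h₂.2 m₁ hgt (blk_symm hB)

theorem not_blk_lt {S : Set M} {x w : M} (h : w < x) :
    ¬ Blk S x w ↔ ∃ z, w ≤ z ∧ z < x ∧ ¬(z ∈ S ↔ x ∈ S) := by
  unfold Blk
  rw [min_eq_right h.le, max_eq_left h.le]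
  constructor
  · intro hnb
    rcases Classical.em (∃ z, w ≤ z ∧ z < x ∧ ¬(z ∈ S ↔ x ∈ S)) with h1 | h1
    · exact h1
    · exfalso; apply hnb; intro z hz1 hz2
      by_contra hzc
      rcases eq_or_lt_of_le hz2 with rfl | hlt
      · exact hzc Iff.rfl
      · exact h1 ⟨z, hz1, hlt, hzc⟩
  · rintro ⟨z, h1, h2, h3⟩ hb
    exact h3 (hb z h1 h2.le)

theorem not_blk_gt {S : Set M} {x w : M} (h : x < w) :
    ¬ Blk S x w ↔ ∃ z, x < z ∧ z ≤ w ∧ ¬(z ∈ S ↔ x ∈ S) := by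
  unfold Blk
  rw [min_eq_left h.le, max_eq_right h.le]
  constructor
  · intro hnb
    rcases Classical.em (∃ z, x < z ∧ z ≤ w ∧ ¬(z ∈ S ↔ x ∈ S)) with h1 | h1
    · exact h1
    · exfalso; apply hnb; intro z hz1 hz2
      by_contra hzc
      rcases eq_or_lt_of_le hz1 with rfl | hlt
      · exact hzc Iff.rfl
      · exact h1 ⟨z, hlt, hz2, hzc⟩
  · rintro ⟨z, h1, h2, h3⟩ hb
    exact h3 (hb z h1.le h2)

theorem mem_jumpSet_iff {S : Set M} {x : M} :
    x ∈ JumpSet S ↔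
      ((∃ w, w < x) ∧ ∀ w, w < x → ∃ z, w ≤ z ∧ z < x ∧ ¬(z ∈ S ↔ x ∈ S)) ∨
      ((∃ w, x < w) ∧ ∀ w, x < w → ∃ z, x < z ∧ z ≤ w ∧ ¬(z ∈ S ↔ x ∈ S)) := by
  unfold JumpSet
  simp only [Set.mem_setOf_eq]
  constructor
  · rintro (⟨h1, h2⟩ | ⟨h1, h2⟩)
    · exact Or.inl ⟨h1, fun w hw => (not_blk_lt hw).mp (h2 w hw)⟩
    · exact Or.inr ⟨h1, fun w hw => (not_blk_gt hw).mp (h2 w hw)⟩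
  · rintro (⟨h1, h2⟩ | ⟨h1, h2⟩)
    · exact Or.inl ⟨h1, fun w hw => (not_blk_lt hw).mpr (h2 w hw)⟩
    · exact Or.inr ⟨h1, fun w hw => (not_blk_gt hw).mpr (h2 w hw)⟩

end OMin

section Formulas

variable {L : Language} [L.IsOrdered] {α : Type*}

/-- The variable `g` as a term. -/
abbrev vT {γ : Type*} (g : γ) : L.Term (γ ⊕ Fin 0) := Term.var (Sum.inl g)

def ltF {γ : Type*} (g g' : γ) : L.Formula γ := Term.lt (L := L) (vT g) (vT g')
def leF {γ : Type*} (g g' : γ) : L.Formula γ := Term.le (L := L) (vT g) (vT g')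
def eqF {γ : Type*} (g g' : γ) : L.Formula γ := Term.bdEqual (L := L) (vT g) (vT g')

variable {M : Type*} [LinearOrder M] [L.Structure M] [L.OrderedStructure M]

@[simp] theorem realize_ltF {γ : Type*} {g g' : γ} {v : γ → M} :
    (ltF (L := L) g g').Realize v ↔ v g < v g' := by
  simp [ltF, Formula.Realize, Term.realize_lt]

@[simp] theorem realize_leF {γ : Type*} {g g' : γ} {v : γ → M} :
    (leF (L := L) g g').Realize v ↔ v g ≤ v g' := by
  simp [leF, Formula.Realize, Term.realize_le]

@[simp] theorem realize_eqF {γ : Type*} {g g' : γ} {v : γ → M} :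
    (eqF (L := L) g g').Realize v ↔ v g = v g' := by
  simp [eqF, Formula.Realize, BoundedFormula.realize_bdEqual]

/-- Substitute the `Unit` variable of `ψ` by the variable `g`, and rename the
parameter variables along `f`. -/
noncomputable def atF {γ : Type*} (ψ : L.Formula (α ⊕ Unit)) (f : α → γ) (g : γ) :
    L.Formula γ :=
  ψ.relabel (Sum.elim f fun _ => g)

@[simp] theorem realize_atF {γ : Type*} {ψ : L.Formula (α ⊕ Unit)} {f : α → γ} {g : γ}
    {u : γ → M} :
    (atF ψ f g).Realize u ↔ ψ.Realize (Sum.elim (fun a => u (f a)) fun _ => u g) := by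
  rw [atF, Formula.realize_relabel]
  exact iff_of_eq (congrArg _ (funext fun a => by cases a <;> rfl))

/-- Formula asserting that the free variable (the `Unit` coordinate) is a jump point
of the set defined by `ψ`. -/
noncomputable def blkFml (ψ : L.Formula (α ⊕ Unit)) : L.Formula (α ⊕ Unit) :=
  let x₂ : (α ⊕ Unit) ⊕ Unit := Sum.inl (Sum.inr ())
  let w₂ : (α ⊕ Unit) ⊕ Unit := Sum.inr ()
  let x₃ : ((α ⊕ Unit) ⊕ Unit) ⊕ Unit := Sum.inl (Sum.inl (Sum.inr ()))
  let w₃ : ((α ⊕ Unit) ⊕ Unit) ⊕ Unit := Sum.inl (Sum.inr ())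
  let z₃ : ((α ⊕ Unit) ⊕ Unit) ⊕ Unit := Sum.inr ()
  let f₃ : α → ((α ⊕ Unit) ⊕ Unit) ⊕ Unit := fun a => Sum.inl (Sum.inl (Sum.inl a))
  let diff := ((atF ψ f₃ z₃).iff (atF ψ f₃ x₃)).not
  ((Formula.iExs Unit (ltF w₂ x₂)) ⊓
    Formula.iAlls Unit ((ltF w₂ x₂).imp
      (Formula.iExs Unit ((leF w₃ z₃) ⊓ ((ltF z₃ x₃) ⊓ diff))))) ⊔
  ((Formula.iExs Unit (ltF x₂ w₂)) ⊓
    Formula.iAlls Unit ((ltF x₂ w₂).imp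
      (Formula.iExs Unit ((ltF x₃ z₃) ⊓ ((leF z₃ w₃) ⊓ diff)))))

theorem realize_blkFml (ψ : L.Formula (α ⊕ Unit)) (v : α → M) (x : M) :
    (blkFml ψ).Realize (Sum.elim v fun _ => x) ↔
      x ∈ OMin.JumpSet {y : M | ψ.Realize (Sum.elim v fun _ => y)} := by
  rw [OMin.mem_jumpSet_iff]
  simp only [blkFml, Formula.realize_sup, Formula.realize_inf, Formula.realize_iExs,
    Formula.realize_iAlls, Formula.realize_imp, Formula.realize_not, Formula.realize_iff,
    realize_atF, realize_ltF, realize_leF, Set.mem_setOf_eq, id_eq,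
    Sum.elim_inl, Sum.elim_inr]
  constructor
  · rintro (⟨⟨i, hi⟩, h2⟩ | ⟨⟨i, hi⟩, h2⟩)
    · refine Or.inl ⟨⟨i (), hi⟩, fun w hw => ?_⟩
      obtain ⟨j, h1, h2', h3⟩ := h2 (fun _ => w) hw
      exact ⟨j (), h1, h2', h3⟩
    · refine Or.inr ⟨⟨i (), hi⟩, fun w hw => ?_⟩
      obtain ⟨j, h1, h2', h3⟩ := h2 (fun _ => w) hw
      exact ⟨j (), h1, h2', h3⟩
  · rintro (⟨⟨w, hw⟩, h2⟩ | ⟨⟨w, hw⟩, h2⟩)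
    · refine Or.inl ⟨⟨fun _ => w, hw⟩, fun i hi => ?_⟩
      obtain ⟨z, h1, h2', h3⟩ := h2 (i ()) hi
      exact ⟨fun _ => z, h1, h2', h3⟩
    · refine Or.inr ⟨⟨fun _ => w, hw⟩, fun i hi => ?_⟩
      obtain ⟨z, h1, h2', h3⟩ := h2 (i ()) hi
      exact ⟨fun _ => z, h1, h2', h3⟩

noncomputable def finsetInf {ι β : Type*} {n : ℕ} (s : Finset ι) (f : ι → L.BoundedFormula β n) :
    L.BoundedFormula β n := BoundedFormula.iInf (fun i : s => f i)

noncomputable def finsetSup {ι β : Type*} {n : ℕ} (s : Finset ι) (f : ι → L.BoundedFormula β n) :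
    L.BoundedFormula β n := BoundedFormula.iSup (fun i : s => f i)

@[simp] theorem realize_iInfF {ι : Type*} {γ : Type*} {s : Finset ι} {f : ι → L.Formula γ}
    {v : γ → M} : Formula.Realize (finsetInf s f) v ↔ ∀ i ∈ s, (f i).Realize v := by
  simp [Formula.Realize, finsetInf, BoundedFormula.realize_iInf]

@[simp] theorem realize_iSupF {ι : Type*} {γ : Type*} {s : Finset ι} {f : ι → L.Formula γ}
    {v : γ → M} : Formula.Realize (finsetSup s f) v ↔ ∃ i ∈ s, (f i).Realize v := by
  simp [Formula.Realize, finsetSup, BoundedFormula.realize_iSup]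

/-- `posFml β n` says: the subject satisfies `β`, and there are exactly `n` elements
below it satisfying `β` (via an explicit enumeration). -/
noncomputable def posFml (β : L.Formula (α ⊕ Unit)) (n : ℕ) : L.Formula (α ⊕ Unit) :=
  let E := (α ⊕ Unit) ⊕ Fin n
  let xE : E := Sum.inl (Sum.inr ())
  let chain : L.Formula E := finsetInf
    (Finset.univ.filter fun p : Fin n × Fin n => p.1 < p.2)
    (fun p => ltF (Sum.inr p.1) (Sum.inr p.2))
  let allβlt : L.Formula E := finsetInf Finset.univ
    (fun i : Fin n => (atF β (fun a => Sum.inl (Sum.inl a)) (Sum.inr i)) ⊓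
      ltF (Sum.inr i) xE)
  let cover : L.Formula E := Formula.iAlls Unit
    (((atF β (fun a => Sum.inl (Sum.inl (Sum.inl a))) (Sum.inr ())) ⊓
        ltF (Sum.inr ()) (Sum.inl xE)).imp
      (finsetSup Finset.univ
        (fun i : Fin n => eqF (γ := E ⊕ Unit) (Sum.inr ()) (Sum.inl (Sum.inr i)))))
  β ⊓ Formula.iExs (Fin n) (chain ⊓ (allβlt ⊓ cover))

theorem realize_posFml (β : L.Formula (α ⊕ Unit)) (n : ℕ) (v : α → M) (x : M) :
    (posFml β n).Realize (Sum.elim v fun _ => x) ↔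
      (β.Realize (Sum.elim v fun _ => x) ∧
        ∃ ys : Fin n → M, (∀ i j : Fin n, i < j → ys i < ys j) ∧
          (∀ i, β.Realize (Sum.elim v fun _ => ys i) ∧ ys i < x) ∧
          ∀ z, β.Realize (Sum.elim v fun _ => z) → z < x → ∃ i, z = ys i) := by
  simp only [posFml, Formula.realize_inf, Formula.realize_iExs, Formula.realize_iAlls,
    Formula.realize_imp, realize_iInfF, realize_iSupF, realize_atF, realize_ltF, realize_eqF,
    Finset.mem_filter, Finset.mem_univ, true_and, id_eq, Sum.elim_inl, Sum.elim_inr]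
  refine and_congr Iff.rfl ?_
  constructor
  · rintro ⟨ys, h1, h2, h3⟩
    refine ⟨ys, fun i j hij => h1 (i, j) hij, fun i => h2 i trivial, fun z hz1 hz2 => ?_⟩
    exact h3 (fun _ => z) ⟨hz1, hz2⟩
  · rintro ⟨ys, h1, h2, h3⟩
    refine ⟨ys, fun p hp => h1 p.1 p.2 hp, fun i _ => h2 i, fun j hj => ?_⟩
    exact h3 (j ()) hj.1 hj.2

/-- `covFml β n` says: every element satisfying `β` equals one of the `n`
distinguished parameters. -/
noncomputable def covFml (β : L.Formula (α ⊕ Unit)) (n : ℕ) : L.Formula (α ⊕ Fin n) :=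
  Formula.iAlls Unit
    (((atF β (fun a => Sum.inl (Sum.inl a)) (Sum.inr ())).imp
      (finsetSup Finset.univ
        (fun i : Fin n => eqF (γ := (α ⊕ Fin n) ⊕ Unit) (Sum.inr ()) (Sum.inl (Sum.inr i))))))

theorem realize_covFml (β : L.Formula (α ⊕ Unit)) (n : ℕ) (v : α → M) (w : Fin n → M) :
    (covFml β n).Realize (Sum.elim v w) ↔
      ∀ x : M, β.Realize (Sum.elim v fun _ => x) → ∃ i, x = w i := by
  simp only [covFml, Formula.realize_iAlls, Formula.realize_imp, realize_iSupF, realize_atF,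
    realize_eqF, Finset.mem_univ, true_and, id_eq, Sum.elim_inl, Sum.elim_inr]
  exact ⟨fun hh x hx => hh (fun _ => x) hx, fun hh j hj => hh (j ()) hj⟩

/-- `∃ y, θ(y) ∧ y < x`. -/
noncomputable def lowFml (θ : L.Formula (α ⊕ Unit)) : L.Formula (α ⊕ Unit) :=
  Formula.iExs Unit ((atF θ (fun a => Sum.inl (Sum.inl a)) (Sum.inr ())) ⊓
    ltF (Sum.inr ()) (Sum.inl (Sum.inr ())))

theorem realize_lowFml (θ : L.Formula (α ⊕ Unit)) (v : α → M) (x : M) :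
    (lowFml θ).Realize (Sum.elim v fun _ => x) ↔
      ∃ y : M, θ.Realize (Sum.elim v fun _ => y) ∧ y < x := by
  simp only [lowFml, Formula.realize_iExs, Formula.realize_inf, realize_atF, realize_ltF,
    id_eq, Sum.elim_inl, Sum.elim_inr]
  exact ⟨fun ⟨i, h1, h2⟩ => ⟨i (), h1, h2⟩, fun ⟨y, h1, h2⟩ => ⟨fun _ => y, h1, h2⟩⟩

/-- `∃ y, θ(y) ∧ x < y`. -/
noncomputable def highFml (θ : L.Formula (α ⊕ Unit)) : L.Formula (α ⊕ Unit) :=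
  Formula.iExs Unit ((atF θ (fun a => Sum.inl (Sum.inl a)) (Sum.inr ())) ⊓
    ltF (Sum.inl (Sum.inr ())) (Sum.inr ()))

theorem realize_highFml (θ : L.Formula (α ⊕ Unit)) (v : α → M) (x : M) :
    (highFml θ).Realize (Sum.elim v fun _ => x) ↔
      ∃ y : M, θ.Realize (Sum.elim v fun _ => y) ∧ x < y := by
  simp only [highFml, Formula.realize_iExs, Formula.realize_inf, realize_atF, realize_ltF,
    id_eq, Sum.elim_inl, Sum.elim_inr]
  exact ⟨fun ⟨i, h1, h2⟩ => ⟨i (), h1, h2⟩, fun ⟨y, h1, h2⟩ => ⟨fun _ => y, h1, h2⟩⟩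

theorem posFml_unique (β : L.Formula (α ⊕ Unit)) (n : ℕ) (v : α → M) :
    ∀ {x x' : M}, (posFml β n).Realize (Sum.elim v fun _ => x) →
    (posFml β n).Realize (Sum.elim v fun _ => x') → x = x' := by
  suffices H : ∀ x x' : M, (posFml β n).Realize (Sum.elim v fun _ => x) →
      (posFml β n).Realize (Sum.elim v fun _ => x') → ¬ x < x' by
    intro x x' h1 h2
    rcases lt_trichotomy x x' with hc | hc | hc
    · exact absurd hc (H x x' h1 h2)
    · exact hc
    · exact absurd hc (H x' x h2 h1)
  intro x x' hx hx' hlt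
  rw [realize_posFml] at hx hx'
  obtain ⟨hβ, ys, hch, hprop, hcov⟩ := hx
  obtain ⟨hβ', ys', hch', hprop', hcov'⟩ := hx'
  set g : Fin (n + 1) → M := fun t => if h : (t : ℕ) < n then ys ⟨t, h⟩ else x with hg
  have hgmono : StrictMono g := by
    intro s t hst
    rw [hg]; dsimp only
    by_cases ht : (t : ℕ) < n
    · have hs : (s : ℕ) < n := lt_trans hst ht
      rw [dif_pos hs, dif_pos ht]
      exact hch _ _ hst
    · have ht' : (t : ℕ) = n := le_antisymm (Nat.lt_succ_iff.mp t.isLt) (not_lt.mp ht)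
      have hs : (s : ℕ) < n := by
        have := hst; omega
      rw [dif_pos hs, dif_neg ht]
      exact (hprop _).2
  have hrange : ∀ t : Fin (n + 1), ∃ j, g t = ys' j := by
    intro t
    rw [hg]; dsimp only
    by_cases ht : (t : ℕ) < n
    · rw [dif_pos ht]
      exact hcov' _ (hprop _).1 (lt_trans (hprop _).2 hlt)
    · rw [dif_neg ht]
      exact hcov' x hβ hlt
  choose σ hσ using hrange
  have hσinj : Function.Injective σ := by
    intro s t hst
    have : g s = g t := by rw [hσ s, hσ t, hst]
    exact hgmono.injective this
  have hcard := Fintype.card_le_of_injective σ hσinj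
  simp only [Fintype.card_fin] at hcard
  omega

theorem posFml_exists (β : L.Formula (α ⊕ Unit)) (v : α → M) {x : M}
    (hfin : {y : M | β.Realize (Sum.elim v fun _ => y)}.Finite)
    (hx : β.Realize (Sum.elim v fun _ => x)) :
    ∃ n : ℕ, (posFml β n).Realize (Sum.elim v fun _ => x) := by
  classical
  have hTfin : {y : M | β.Realize (Sum.elim v fun _ => y) ∧ y < x}.Finite :=
    hfin.subset fun y hy => hy.1
  set Tf := hTfin.toFinset with hTf
  refine ⟨Tf.card, ?_⟩
  rw [realize_posFml]
  refine ⟨hx, ?_⟩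
  set e := Tf.orderIsoOfFin rfl with he
  refine ⟨fun i => (e i : M), ?_, ?_, ?_⟩
  · intro i j hij
    exact Subtype.coe_lt_coe.mpr (e.strictMono hij)
  · intro i
    have := (e i).2
    rw [Set.Finite.mem_toFinset] at this
    exact this
  · intro z hz1 hz2
    have hzT : z ∈ Tf := by rw [Set.Finite.mem_toFinset]; exact ⟨hz1, hz2⟩
    obtain ⟨i, hi⟩ := e.surjective ⟨z, hzT⟩
    refine ⟨i, ?_⟩
    have := congrArg Subtype.val hi
    exact this.symm

end Formulas

section Transfer

open OMin

variable {L : Language} [L.IsOrdered] {M N : Type*}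
  [LinearOrder M] [LinearOrder N] [L.Structure M] [L.Structure N]
  [L.OrderedStructure M] [L.OrderedStructure N]

theorem elim_comp_fun {B C : Type*} (g : B → C) {kk : ℕ} (f : Fin kk → B) (x : B) :
    Sum.elim (g ∘ f) (fun _ : Unit => g x) = g ∘ Sum.elim f (fun _ => x) :=
  funext fun s => by cases s <;> rfl

theorem elim_comp_fun2 {B C : Type*} (g : B → C) {kk n : ℕ} (f : Fin kk → B) (w : Fin n → B) :
    Sum.elim (g ∘ f) (g ∘ w) = g ∘ Sum.elim f w :=
  funext fun s => by cases s <;> rfl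

def IsOMinimalStructure' (L : Language) (M : Type*) [LinearOrder M] [L.Structure M] :
    Prop :=
  ∀ (n : ℕ) (φ : L.Formula (Fin n ⊕ Unit)) (v : Fin n → M),
    IsFinUnionIntervals {x : M | φ.Realize (Sum.elim v fun _ => x)}

theorem jumpSet_def_finite (hM : IsOMinimalStructure' L M) {l : ℕ}
    (ψ : L.Formula (Fin l ⊕ Unit)) (c : Fin l → M) :
    (JumpSet {y : M | ψ.Realize (Sum.elim c fun _ => y)}).Finite := by
  apply jumpSet_finite (hM l ψ c)
  have hc : {y : M | (ψ.not).Realize (Sum.elim c fun _ => y)} =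
      {y : M | ψ.Realize (Sum.elim c fun _ => y)}ᶜ := by
    ext y; simp [Formula.realize_not]
  rw [← hc]
  exact hM l ψ.not c

theorem jumpSet_image (h : M ↪ₑ[L] N) (hM : IsOMinimalStructure' L M) {l : ℕ}
    (ψ : L.Formula (Fin l ⊕ Unit)) (c : Fin l → M) :
    JumpSet {x : N | ψ.Realize (Sum.elim (⇑h ∘ c) fun _ => x)} =
      ⇑h '' JumpSet {y : M | ψ.Realize (Sum.elim c fun _ => y)} := by
  classical
  set BM := JumpSet {y : M | ψ.Realize (Sum.elim c fun _ => y)} with hBM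
  have hfin : BM.Finite := jumpSet_def_finite hM ψ c
  set n := hfin.toFinset.card with hn
  set e := hfin.toFinset.orderIsoOfFin rfl with he
  set w : Fin n → M := fun i => (e i : M) with hw
  have hwB : ∀ i, w i ∈ BM := fun i => by
    have := (e i).2; rwa [Set.Finite.mem_toFinset] at this
  have hcovM : (covFml (blkFml ψ) n).Realize (Sum.elim c w) := by
    rw [realize_covFml]
    intro y hy
    rw [realize_blkFml] at hy
    have hyB : y ∈ hfin.toFinset := by rwa [Set.Finite.mem_toFinset]
    obtain ⟨i, hi⟩ := e.surjective ⟨y, hyB⟩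
    exact ⟨i, (congrArg Subtype.val hi).symm⟩
  have hcovN : (covFml (blkFml ψ) n).Realize (Sum.elim (⇑h ∘ c) (⇑h ∘ w)) := by
    rw [elim_comp_fun2]
    exact (h.map_formula _ _).mpr hcovM
  rw [realize_covFml] at hcovN
  ext x
  constructor
  · intro hx
    have hx' : (blkFml ψ).Realize (Sum.elim (⇑h ∘ c) fun _ => x) :=
      (realize_blkFml ψ (⇑h ∘ c) x).mpr hx
    obtain ⟨i, hi⟩ := hcovN x hx'
    exact ⟨w i, hwB i, hi.symm⟩
  · rintro ⟨d, hd, rfl⟩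
    have hd' : (blkFml ψ).Realize (Sum.elim c fun _ => d) := (realize_blkFml ψ c d).mpr hd
    have hd2 : (blkFml ψ).Realize (Sum.elim (⇑h ∘ c) fun _ => h d) := by
      rw [elim_comp_fun]; exact (h.map_formula _ _).mpr hd'
    exact (realize_blkFml ψ (⇑h ∘ c) (h d)).mp hd2

end Transfer

theorem stmt16' {L : Language} [L.IsOrdered] {M N : Type*}
    [LinearOrder M] [LinearOrder N] [L.Structure M] [L.Structure N]
    [L.OrderedStructure M] [L.OrderedStructure N]
    (h : M ↪ₑ[L] N)
    (hM : IsOMinimalStructure' L M) (hN : IsOMinimalStructure' L N)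
    (hyp : ∀ a : N, a ∉ Set.range h → ∀ (k : ℕ) (b : Fin k → M),
      ¬ (∀ (l : ℕ) (c : Fin l → M) (ψ : L.Formula (Fin l ⊕ Unit)),
          ψ.Realize (Sum.elim (h ∘ c) fun _ => a) →
          ∃ φ : L.Formula (Fin k ⊕ Unit),
            φ.Realize (Sum.elim (h ∘ b) fun _ => a) ∧
            ∀ x : N, φ.Realize (Sum.elim (h ∘ b) fun _ => x) →
              ψ.Realize (Sum.elim (h ∘ c) fun _ => x))) :
    ∀ (a : N) (k : ℕ) (b : Fin k → M), ∃ a' : M,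
      ∀ φ : L.Formula (Fin k ⊕ Unit),
        φ.Realize (Sum.elim (h ∘ b) fun _ => a) ↔
          φ.Realize (Sum.elim b fun _ => a') := by
  intro a k b
  classical
  by_cases hrange : a ∈ Set.range h
  · obtain ⟨a', rfl⟩ := hrange
    refine ⟨a', fun φ => ?_⟩
    rw [elim_comp_fun ⇑h b a']
    exact h.map_formula φ _
  · have hlt : ∀ d d' : M, d < d' → h d < h d' := by
      intro d d' hdd
      have hm := h.map_formula (ltF (L := L) (0 : Fin 2) 1) ![d, d']
      simp only [realize_ltF] at hm
      have h2 := hm.mpr (by simpa using hdd)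
      simpa using h2
    have hle : ∀ d d' : M, d ≤ d' → h d ≤ h d' := by
      intro d d' hdd
      rcases eq_or_lt_of_le hdd with rfl | hl
      · exact le_refl _
      · exact (hlt _ _ hl).le
    have hane : ∀ d : M, a ≠ h d := fun d he => hrange ⟨d, he.symm⟩
    have hNc : ∀ (l : ℕ) (ψ : L.Formula (Fin l ⊕ Unit)) (v : Fin l → N),
        IsFinUnionIntervals {x : N | ψ.Realize (Sum.elim v fun _ => x)}ᶜ := by
      intro l ψ v
      have hc : {x : N | (ψ.not).Realize (Sum.elim v fun _ => x)} =
          {x : N | ψ.Realize (Sum.elim v fun _ => x)}ᶜ := by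
        ext x; simp [Formula.realize_not]
      rw [← hc]; exact hN l ψ.not v
    set D : Set M := {d : M | ∃ φ₀ : L.Formula (Fin k ⊕ Unit),
      d ∈ OMin.JumpSet {y : M | φ₀.Realize (Sum.elim b fun _ => y)}} with hD
    by_cases hex : ∃ a' : M, (∀ d ∈ D, (d < a' ↔ h d < a)) ∧ (∀ d ∈ D, (a' < d ↔ a < h d))
    · obtain ⟨a', ha1, ha2⟩ := hex
      refine ⟨a', fun φ => ?_⟩
      have hno : ∀ z : N, min a (h a') ≤ z → z ≤ max a (h a') →
          z ∉ OMin.JumpSet {x : N | φ.Realize (Sum.elim (⇑h ∘ b) fun _ => x)} := by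
        intro z h1z h2z hzJ
        rw [jumpSet_image h hM φ b] at hzJ
        obtain ⟨d, hdB, rfl⟩ := hzJ
        have hdD : d ∈ D := ⟨φ, hdB⟩
        rcases lt_or_gt_of_ne (hane d) with had | hda
        · have h1 : a' < d := (ha2 d hdD).mpr had
          have h2 : max a (h a') < h d := max_lt had (hlt _ _ h1)
          exact absurd h2z (not_le.mpr h2)
        · have h1 : d < a' := (ha1 d hdD).mpr hda
          have h2 : h d < min a (h a') := lt_min hda (hlt _ _ h1)
          exact absurd h1z (not_le.mpr h2)
      have hkey := OMin.key_const (hN k φ (⇑h ∘ b)) (hNc k φ (⇑h ∘ b)) min_le_max hno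
      have hAB : φ.Realize (Sum.elim (⇑h ∘ b) fun _ => a) ↔
          φ.Realize (Sum.elim (⇑h ∘ b) fun _ => h a') := by
        rcases le_total a (h a') with hle' | hle'
        · rw [min_eq_left hle', max_eq_right hle'] at hkey; exact hkey
        · rw [min_eq_right hle', max_eq_left hle'] at hkey; exact hkey.symm
      rw [hAB, elim_comp_fun ⇑h b a']
      exact h.map_formula φ _
    · exfalso
      apply hyp a hrange k b
      intro l c ψ hψ
      set BM := OMin.JumpSet {y : M | ψ.Realize (Sum.elim c fun _ => y)} with hBMdef
      have hBMfin : BM.Finite := jumpSet_def_finite hM ψ c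
      set LB := {d : M | d ∈ BM ∧ h d < a} with hLBdef
      set UB := {d : M | d ∈ BM ∧ a < h d} with hUBdef
      have hsplit : ∀ d ∈ BM, d ∈ LB ∨ d ∈ UB := by
        intro d hd
        rcases lt_or_gt_of_ne (hane d) with had | hda
        · exact Or.inr ⟨hd, had⟩
        · exact Or.inl ⟨hd, hda⟩
      have main2 : ∀ x : N, (∀ d ∈ LB, h d < x) → (∀ d ∈ UB, x < h d) →
          ψ.Realize (Sum.elim (⇑h ∘ c) fun _ => x) := by
        intro x hxl hxu
        have hno : ∀ z : N, min x a ≤ z → z ≤ max x a →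
            z ∉ OMin.JumpSet {t : N | ψ.Realize (Sum.elim (⇑h ∘ c) fun _ => t)} := by
          intro z h1z h2z hzJ
          rw [jumpSet_image h hM ψ c] at hzJ
          obtain ⟨d, hdB, rfl⟩ := hzJ
          rcases hsplit d hdB with hdl | hdu
          · have h2 : h d < min x a := lt_min (hxl d hdl) hdl.2
            exact absurd h1z (not_le.mpr h2)
          · have h2 : max x a < h d := max_lt (hxu d hdu) hdu.2
            exact absurd h2z (not_le.mpr h2)
        have hkey := OMin.key_const (hN l ψ (⇑h ∘ c)) (hNc l ψ (⇑h ∘ c)) min_le_max hno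
        rcases le_total x a with hle' | hle'
        · rw [min_eq_left hle', max_eq_right hle'] at hkey
          exact hkey.mpr hψ
        · rw [min_eq_right hle', max_eq_left hle'] at hkey
          exact hkey.mp hψ
      have hexn : ∀ a' : M,
          ¬ ((∀ d ∈ D, (d < a' ↔ h d < a)) ∧ (∀ d ∈ D, (a' < d ↔ a < h d))) :=
        fun a' hc => hex ⟨a', hc⟩
      have pin : ∀ δ : M, δ ∈ D → ∃ θ : L.Formula (Fin k ⊕ Unit),
          θ.Realize (Sum.elim (⇑h ∘ b) fun _ => h δ) ∧
          ∀ x : N, θ.Realize (Sum.elim (⇑h ∘ b) fun _ => x) → x = h δ := by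
        intro δ hδD
        obtain ⟨φ₀, hδB⟩ := hδD
        have hβfin : {y : M | (blkFml φ₀).Realize (Sum.elim b fun _ => y)}.Finite := by
          have hset : {y : M | (blkFml φ₀).Realize (Sum.elim b fun _ => y)} =
              OMin.JumpSet {y : M | φ₀.Realize (Sum.elim b fun _ => y)} := by
            ext y; exact realize_blkFml φ₀ b y
          rw [hset]; exact jumpSet_def_finite hM φ₀ b
        obtain ⟨n₁, hθ⟩ := posFml_exists (blkFml φ₀) b hβfin ((realize_blkFml φ₀ b δ).mpr hδB)
        have hθN : (posFml (blkFml φ₀) n₁).Realize (Sum.elim (⇑h ∘ b) fun _ => h δ) := by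
          rw [elim_comp_fun]; exact (h.map_formula _ _).mpr hθ
        exact ⟨posFml (blkFml φ₀) n₁, hθN,
          fun x hx => posFml_unique (blkFml φ₀) n₁ (⇑h ∘ b) hx hθN⟩
      have getlow : LB.Nonempty → ∃ (δ : M) (θ : L.Formula (Fin k ⊕ Unit)),
          h δ < a ∧ (∀ d ∈ LB, d ≤ δ) ∧
          θ.Realize (Sum.elim (⇑h ∘ b) fun _ => h δ) ∧
          (∀ x : N, θ.Realize (Sum.elim (⇑h ∘ b) fun _ => x) → x = h δ) := by
        intro hne
        have hLBfin : LB.Finite := hBMfin.subset fun d hd => hd.1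
        have htne : hLBfin.toFinset.Nonempty := (Set.Finite.toFinset_nonempty _).mpr hne
        set d₁ := hLBfin.toFinset.max' htne with hd₁def
        have hd₁LB : d₁ ∈ LB := by
          have hh := hLBfin.toFinset.max'_mem htne
          rwa [Set.Finite.mem_toFinset] at hh
        have hd₁max : ∀ d ∈ LB, d ≤ d₁ := fun d hd =>
          hLBfin.toFinset.le_max' d (by rwa [Set.Finite.mem_toFinset])
        obtain ⟨δ, hδD, hδa, hδge⟩ : ∃ δ, δ ∈ D ∧ h δ < a ∧ d₁ ≤ δ := by
          rcases not_and_or.mp (hexn d₁) with hf | hf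
          · obtain ⟨d, hd⟩ := not_forall.mp hf
            have hdD : d ∈ D := by tauto
            have hdni : ¬ (d < d₁ ↔ h d < a) := by tauto
            rcases lt_or_gt_of_ne (hane d) with had | hda
            · have h1 : d < d₁ := by
                by_contra hc
                exact hdni (iff_of_false hc (not_lt.mpr had.le))
              exact absurd (lt_trans (hlt _ _ h1) hd₁LB.2) (not_lt.mpr had.le)
            · have h1 : ¬ d < d₁ := fun hc => hdni (iff_of_true hc hda)
              exact ⟨d, hdD, hda, not_lt.mp h1⟩
          · obtain ⟨d, hd⟩ := not_forall.mp hf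
            have hdD : d ∈ D := by tauto
            have hdni : ¬ (d₁ < d ↔ a < h d) := by tauto
            rcases lt_or_gt_of_ne (hane d) with had | hda
            · have h1 : ¬ d₁ < d := fun hc => hdni (iff_of_true hc had)
              exact absurd (lt_of_le_of_lt (hle _ _ (not_lt.mp h1)) hd₁LB.2)
                (not_lt.mpr had.le)
            · have h1 : d₁ < d := by
                by_contra hc
                exact hdni (iff_of_false hc (not_lt.mpr hda.le))
              exact ⟨d, hdD, hda, h1.le⟩
        obtain ⟨θ, hθ1, hθ2⟩ := pin δ hδD
        exact ⟨δ, θ, hδa, fun d hd => le_trans (hd₁max d hd) hδge, hθ1, hθ2⟩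
      have gethigh : UB.Nonempty → ∃ (δ : M) (θ : L.Formula (Fin k ⊕ Unit)),
          a < h δ ∧ (∀ d ∈ UB, δ ≤ d) ∧
          θ.Realize (Sum.elim (⇑h ∘ b) fun _ => h δ) ∧
          (∀ x : N, θ.Realize (Sum.elim (⇑h ∘ b) fun _ => x) → x = h δ) := by
        intro hne
        have hUBfin : UB.Finite := hBMfin.subset fun d hd => hd.1
        have htne : hUBfin.toFinset.Nonempty := (Set.Finite.toFinset_nonempty _).mpr hne
        set d₂ := hUBfin.toFinset.min' htne with hd₂def
        have hd₂UB : d₂ ∈ UB := by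
          have hh := hUBfin.toFinset.min'_mem htne
          rwa [Set.Finite.mem_toFinset] at hh
        have hd₂min : ∀ d ∈ UB, d₂ ≤ d := fun d hd =>
          hUBfin.toFinset.min'_le d (by rwa [Set.Finite.mem_toFinset])
        obtain ⟨δ, hδD, haδ, hδle⟩ : ∃ δ, δ ∈ D ∧ a < h δ ∧ δ ≤ d₂ := by
          rcases not_and_or.mp (hexn d₂) with hf | hf
          · obtain ⟨d, hd⟩ := not_forall.mp hf
            have hdD : d ∈ D := by tauto
            have hdni : ¬ (d < d₂ ↔ h d < a) := by tauto
            rcases lt_or_gt_of_ne (hane d) with had | hda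
            · have h1 : d < d₂ := by
                by_contra hc
                exact hdni (iff_of_false hc (not_lt.mpr had.le))
              exact ⟨d, hdD, had, h1.le⟩
            · have h1 : ¬ d < d₂ := fun hc => hdni (iff_of_true hc hda)
              exact absurd (lt_of_lt_of_le hd₂UB.2 (hle _ _ (not_lt.mp h1)))
                (not_lt.mpr hda.le)
          · obtain ⟨d, hd⟩ := not_forall.mp hf
            have hdD : d ∈ D := by tauto
            have hdni : ¬ (d₂ < d ↔ a < h d) := by tauto
            rcases lt_or_gt_of_ne (hane d) with had | hda
            · have h1 : ¬ d₂ < d := fun hc => hdni (iff_of_true hc had)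
              exact ⟨d, hdD, had, not_lt.mp h1⟩
            · have h1 : d₂ < d := by
                by_contra hc
                exact hdni (iff_of_false hc (not_lt.mpr hda.le))
              exact absurd (lt_trans hd₂UB.2 (hlt _ _ h1)) (not_lt.mpr hda.le)
        obtain ⟨θ, hθ1, hθ2⟩ := pin δ hδD
        exact ⟨δ, θ, haδ, fun d hd => le_trans hδle (hd₂min d hd), hθ1, hθ2⟩
      rcases Classical.em LB.Nonempty with hLBne | hLBne <;>
        rcases Classical.em UB.Nonempty with hUBne | hUBne
      · obtain ⟨δ₁, θ₁, hδ₁a, hδ₁ge, hθ₁N, huniq₁⟩ := getlow hLBne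
        obtain ⟨δ₂, θ₂, haδ₂, hδ₂le, hθ₂N, huniq₂⟩ := gethigh hUBne
        refine ⟨lowFml θ₁ ⊓ highFml θ₂, ?_, ?_⟩
        · rw [Formula.realize_inf, realize_lowFml, realize_highFml]
          exact ⟨⟨h δ₁, hθ₁N, hδ₁a⟩, ⟨h δ₂, hθ₂N, haδ₂⟩⟩
        · intro x hx
          rw [Formula.realize_inf, realize_lowFml, realize_highFml] at hx
          obtain ⟨⟨y, hy, hyx⟩, ⟨z, hz, hxz⟩⟩ := hx
          rw [huniq₁ y hy] at hyx
          rw [huniq₂ z hz] at hxz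
          refine main2 x (fun d hd => ?_) (fun d hd => ?_)
          · exact lt_of_le_of_lt (hle _ _ (hδ₁ge d hd)) hyx
          · exact lt_of_lt_of_le hxz (hle _ _ (hδ₂le d hd))
      · obtain ⟨δ₁, θ₁, hδ₁a, hδ₁ge, hθ₁N, huniq₁⟩ := getlow hLBne
        refine ⟨lowFml θ₁, ?_, ?_⟩
        · rw [realize_lowFml]
          exact ⟨h δ₁, hθ₁N, hδ₁a⟩
        · intro x hx
          rw [realize_lowFml] at hx
          obtain ⟨y, hy, hyx⟩ := hx
          rw [huniq₁ y hy] at hyx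
          refine main2 x (fun d hd => lt_of_le_of_lt (hle _ _ (hδ₁ge d hd)) hyx)
            (fun d hd => absurd (Set.nonempty_of_mem hd) hUBne)
      · obtain ⟨δ₂, θ₂, haδ₂, hδ₂le, hθ₂N, huniq₂⟩ := gethigh hUBne
        refine ⟨highFml θ₂, ?_, ?_⟩
        · rw [realize_highFml]
          exact ⟨h δ₂, hθ₂N, haδ₂⟩
        · intro x hx
          rw [realize_highFml] at hx
          obtain ⟨z, hz, hxz⟩ := hx
          rw [huniq₂ z hz] at hxz
          refine main2 x (fun d hd => absurd (Set.nonempty_of_mem hd) hLBne)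
            (fun d hd => lt_of_lt_of_le hxz (hle _ _ (hδ₂le d hd)))
      · refine ⟨eqF (Sum.inr ()) (Sum.inr ()), by rw [realize_eqF], fun x _ => ?_⟩
        exact main2 x (fun d hd => absurd (Set.nonempty_of_mem hd) hLBne)
          (fun d hd => absurd (Set.nonempty_of_mem hd) hUBne)

/-- Let `M ⪯ N` be an elementary extension of o-minimal structures.  If for every
`a ∈ N ∖ M` and every finite tuple `b̄` from `M` the type of `a` over `b̄` does not
generate the type of `a` over `M` (no finite subset of `M` determines `tp(a/M)`), then
`N` is a small extension of `M`: every type over a finite subset of `M` realized in `N`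
is already realized in `M`. -/
theorem stmt16 {L : Language} [L.IsOrdered] {M N : Type*}
    [LinearOrder M] [LinearOrder N] [L.Structure M] [L.Structure N]
    [L.OrderedStructure M] [L.OrderedStructure N]
    (h : M ↪ₑ[L] N)
    (hM : IsOMinimalStructure L M) (hN : IsOMinimalStructure L N)
    (hyp : ∀ a : N, a ∉ Set.range h → ∀ (k : ℕ) (b : Fin k → M),
      ¬ (∀ (l : ℕ) (c : Fin l → M) (ψ : L.Formula (Fin l ⊕ Unit)),
          ψ.Realize (Sum.elim (h ∘ c) fun _ => a) →
          ∃ φ : L.Formula (Fin k ⊕ Unit),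
            φ.Realize (Sum.elim (h ∘ b) fun _ => a) ∧
            ∀ x : N, φ.Realize (Sum.elim (h ∘ b) fun _ => x) →
              ψ.Realize (Sum.elim (h ∘ c) fun _ => x))) :
    ∀ (a : N) (k : ℕ) (b : Fin k → M), ∃ a' : M,
      ∀ φ : L.Formula (Fin k ⊕ Unit),
        φ.Realize (Sum.elim (h ∘ b) fun _ => a) ↔
          φ.Realize (Sum.elim b fun _ => a') :=
  stmt16' h hM hN hyp
end

section
/- Let G be a linearly ordered abelian group, λ an infinite cardinal, M' a subgroup of G^λ containing G^{<λ}. If p is a non-reducible cut over M' (for every α < λ there exist x, y ∈ M' agreeing on coordinates < α but on opposite sides of p), then there exists a ∈ G^λ realizing p: for every e ∈ M', e is on the lower side of p iff e < a, where the initial segments a↾α are obtained as the common initial segments of witnessing pairs. -/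
/-- Let `G` be a linearly ordered abelian group, `λ` infinite (well-ordered, no
maximum), and `M'` a subgroup of `G^λ` containing `G^{<λ}`.  If `(L, U)` is a
non-principal, non-reducible cut over `M'` (for every `α` there are `x ∈ L`, `y ∈ U`
agreeing on coordinates `< α`), then the cut is realized in `G^λ`: there is
`a ∈ G^λ` with `L < a < U` lexicographically. -/
theorem stmt18 {ι G : Type*} [LinearOrder ι] [WellFoundedLT ι] [Infinite ι]
    [NoMaxOrder ι] [AddCommGroup G] [LinearOrder G] [IsOrderedAddMonoid G]
    (M' : AddSubgroup (ι → G))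
    (hbdd : ∀ a : ι → G, (∃ α, ∀ i, α ≤ i → a i = 0) → a ∈ M')
    (L U : Set (ι → G)) (hpart : L ∪ U = (M' : Set (ι → G))) (hdisj : Disjoint L U)
    (hLne : L.Nonempty) (hUne : U.Nonempty)
    (hdown : ∀ x ∈ L, ∀ y ∈ M', lexLt y x → y ∈ L)
    (hup : ∀ x ∈ U, ∀ y ∈ M', lexLt x y → y ∈ U)
    (hnomax : ∀ x ∈ L, ∃ y ∈ L, lexLt x y)
    (hnomin : ∀ x ∈ U, ∃ y ∈ U, lexLt y x)
    (hnonred : ∀ α : ι, ∃ x ∈ L, ∃ y ∈ U, ∀ i, i < α → x i = y i) :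
    ∃ a : ι → G, (∀ e ∈ L, lexLt e a) ∧ (∀ e ∈ U, lexLt a e) := by
  have hLM : ∀ e ∈ L, e ∈ M' := fun e he => by rw [← SetLike.mem_coe, ← hpart]; exact Or.inl he
  have hUM : ∀ e ∈ U, e ∈ M' := fun e he => by rw [← SetLike.mem_coe, ← hpart]; exact Or.inr he
  have hdisj' : ∀ e, e ∈ L → e ∈ U → False :=
    fun e h1 h2 => Set.disjoint_left.1 hdisj h1 h2
  choose x hxL y hyU hxy using hnonred
  -- coherence of the chosen pairs
  have coh : ∀ i : ι, ∀ α α', i < α → i < α' → x α i = x α' i := by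
    intro i
    induction i using WellFoundedLT.induction with
    | ind i ih =>
      intro α α' hα hα'
      by_contra hne
      rcases lt_or_gt_of_ne hne with h | h
      · -- x α i < x α' i : then lexLt (y α) (x α'), so x α' ∈ U, contradiction
        have hYX : lexLt (y α) (x α') := by
          refine ⟨i, fun m hm => ?_, ?_⟩
          · rw [← hxy α m (hm.trans hα)]
            exact ih m hm α α' (hm.trans hα) (hm.trans hα')
          · rw [hxy α i hα] at h; exact h
        exact hdisj' _ (hxL α') (hup _ (hyU α) _ (hLM _ (hxL α')) hYX)
      · have hYX : lexLt (y α') (x α) := by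
          refine ⟨i, fun m hm => ?_, ?_⟩
          · rw [← hxy α' m (hm.trans hα')]
            exact (ih m hm α α' (hm.trans hα) (hm.trans hα')).symm
          · rw [hxy α' i hα'] at h; exact h
        exact hdisj' _ (hxL α) (hup _ (hyU α') _ (hLM _ (hxL α)) hYX)
  choose β hβ using fun i : ι => exists_gt i
  refine ⟨fun i => x (β i) i, ?_, ?_⟩
  · -- lower side
    intro e he
    obtain ⟨e', he'L, n, hagr, hlt⟩ := hnomax e he
    obtain ⟨α, hα⟩ := exists_gt n
    have haX : ∀ i, i < α → x (β i) i = x α i := fun i hi => coh i (β i) α (hβ i) hi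
    -- least index where e differs from y α
    have hneY : e ≠ y α := fun h => hdisj' e he (h ▸ hyU α)
    obtain ⟨d, hd⟩ := Function.ne_iff.1 hneY
    set S : Set ι := {i | e i ≠ y α i} with hS
    have hSne : S.Nonempty := ⟨d, hd⟩
    obtain ⟨m, hmS, hmin⟩ := (wellFounded_lt (α := ι)).has_min S hSne
    have hmagr : ∀ j, j < m → e j = y α j := by
      intro j hj; by_contra hc; exact hmin j hc hj
    have h1 : e m < y α m := by
      rcases lt_or_gt_of_ne hmS with h | h
      · exact h
      · exact absurd (hdown e he (y α) (hUM _ (hyU α)) ⟨m, fun j hj => (hmagr j hj).symm, h⟩)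
          (fun hc => hdisj' _ hc (hyU α))
    have h2 : m ≤ n := by
      by_contra hc
      push_neg at hc
      have hYe' : lexLt (y α) e' := by
        refine ⟨n, fun j hj => ?_, ?_⟩
        · rw [← hmagr j (hj.trans hc), hagr j hj]
        · rw [← hmagr n hc]; exact hlt
      exact hdisj' _ he'L (hup _ (hyU α) _ (hLM _ he'L) hYe')
    refine ⟨m, fun j hj => ?_, ?_⟩
    · show e j = x (β j) j
      rw [haX j ((hj.trans_le h2).trans hα), hxy α j ((hj.trans_le h2).trans hα), hmagr j hj]
    · show e m < x (β m) m
      rw [haX m (h2.trans_lt hα), hxy α m (h2.trans_lt hα)]; exact h1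
  · -- upper side
    intro e he
    obtain ⟨e', he'U, n, hagr, hlt⟩ := hnomin e he
    obtain ⟨α, hα⟩ := exists_gt n
    have haX : ∀ i, i < α → x (β i) i = x α i := fun i hi => coh i (β i) α (hβ i) hi
    have hneX : x α ≠ e := fun h => hdisj' _ (hxL α) (h ▸ he)
    obtain ⟨d, hd⟩ := Function.ne_iff.1 hneX
    set S : Set ι := {i | x α i ≠ e i} with hS
    have hSne : S.Nonempty := ⟨d, hd⟩
    obtain ⟨m, hmS, hmin⟩ := (wellFounded_lt (α := ι)).has_min S hSne
    have hmagr : ∀ j, j < m → x α j = e j := by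
      intro j hj; by_contra hc; exact hmin j hc hj
    have h1 : x α m < e m := by
      rcases lt_or_gt_of_ne hmS with h | h
      · exact h
      · exact absurd (hup e he (x α) (hLM _ (hxL α)) ⟨m, fun j hj => (hmagr j hj).symm, h⟩)
          (fun hc => hdisj' _ (hxL α) hc)
    have h2 : m ≤ n := by
      by_contra hc
      push_neg at hc
      have he'X : lexLt e' (x α) := by
        refine ⟨n, fun j hj => ?_, ?_⟩
        · rw [hagr j hj, ← hmagr j (hj.trans hc)]
        · rw [← hmagr n hc] at hlt; exact hlt
      exact hdisj' _ (hdown _ (hxL α) _ (hUM _ he'U) he'X) he'U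
    refine ⟨m, fun j hj => ?_, ?_⟩
    · show x (β j) j = e j
      rw [haX j ((hj.trans_le h2).trans hα), hmagr j hj]
    · show x (β m) m < e m
      rw [haX m (h2.trans_lt hα)]; exact h1
end
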